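/- arXiv:1801.08231 — 9 statements merged into one kernel-verified Lean document; each statement's English description precedes it below -/
import Mathlib

section
/- For every n-rook a, the two expressions for its length agree: (Σ_{i : a(i)≠0} (a(i) + n − i)) − coinv(a) = Σ_{i=1}^{n} a(i) + inv(a), where coinv(a) = #{(i,j) : i < j and 0 < a(i) < a(j)} and inv(a) = #{(i,j) : i < j and a(i) > a(j)}. -/
open scoped Classical

/-- An `n`-rook in one-line notation: a function `a : Fin n → ℕ` (position `i`
represents position `i+1` in 1-based notation) with values in `{0,…,n}`, whose
nonzero values are pairwise distinct. `a i = 0` means position `i` is vacant. -/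
def IsRook (n : ℕ) (a : Fin n → ℕ) : Prop :=
  (∀ i, a i ≤ n) ∧ ∀ i j, a i ≠ 0 → a i = a j → i = j

/-- The rank of a rook: the number of nonzero entries. -/
def rookRank (n : ℕ) (a : Fin n → ℕ) : ℕ :=
  (Finset.univ.filter (fun i => a i ≠ 0)).card

/-- `inv(a) = #{(i,j) : i < j ∧ a i > a j}`. -/
def rookInv (n : ℕ) (a : Fin n → ℕ) : ℕ :=
  (Finset.univ.filter (fun p : Fin n × Fin n => p.1 < p.2 ∧ a p.2 < a p.1)).card

/-- `coinv(a) = #{(i,j) : i < j ∧ 0 < a i < a j}`. -/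
def rookCoinv (n : ℕ) (a : Fin n → ℕ) : ℕ :=
  (Finset.univ.filter (fun p : Fin n × Fin n => p.1 < p.2 ∧ 0 < a p.1 ∧ a p.1 < a p.2)).card

/-- The length `ℓ(a) = Σ a i + inv(a)`. -/
def rookLen (n : ℕ) (a : Fin n → ℕ) : ℕ :=
  (∑ i, a i) + rookInv n a

/-!
Splitting `a i + n - (i + 1)` as `a i + (n - (i + 1))`, the claim says that
`Σ_{a i ≠ 0} (n - (i + 1))` equals `inv(a) + coinv(a)`. The left side counts the pairs
`i < j` with `a i ≠ 0`, and since the nonzero values of a rook are distinct, each such pair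
has either `a i > a j` (an inversion) or `0 < a i < a j` (a coinversion), never both.
-/

open Finset

theorem Fin.card_filter_fst_mem_lt {n : ℕ} (s : Finset (Fin n)) :
    #{p : Fin n × Fin n | p.1 ∈ s ∧ p.1 < p.2} = ∑ i ∈ s, (n - (i.val + 1)) := by
  have hprod : ({p | p.1 ∈ s ∧ p.1 < p.2} : Finset (Fin n × Fin n)) =
      {p ∈ s ×ˢ (univ : Finset (Fin n)) | p.1 < p.2} := by
    ext; simp
  rw [hprod, card_filter, sum_product]
  refine sum_congr rfl fun i _ => ?_
  rw [sum_boole, filter_lt_eq_Ioi, Fin.card_Ioi, Nat.cast_id]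
  omega

theorem rookInv_add_rookCoinv {n : ℕ} {a : Fin n → ℕ}
    (ha : ∀ i j, a i ≠ 0 → a i = a j → i = j) :
    rookInv n a + rookCoinv n a = #{p : Fin n × Fin n | a p.1 ≠ 0 ∧ p.1 < p.2} := by
  have hdisj : Disjoint ({p | p.1 < p.2 ∧ a p.2 < a p.1} : Finset (Fin n × Fin n))
      ({p | p.1 < p.2 ∧ 0 < a p.1 ∧ a p.1 < a p.2} : Finset (Fin n × Fin n)) := by
    rw [disjoint_filter]
    omega
  rw [rookInv, rookCoinv, ← card_union_of_disjoint hdisj, ← filter_or]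
  congr 1
  ext ⟨i, j⟩
  simp only [mem_filter, mem_univ, true_and]
  constructor
  · rintro (⟨hij, hlt⟩ | ⟨hij, hpos, -⟩) <;> exact ⟨by omega, hij⟩
  · rintro ⟨hi, hij⟩
    rcases lt_trichotomy (a i) (a j) with hlt | heq | hgt
    · exact Or.inr ⟨hij, Nat.pos_of_ne_zero hi, hlt⟩
    · exact absurd (ha i j hi heq) hij.ne
    · exact Or.inl ⟨hij, hgt⟩

/-- For every `n`-rook `a`,
`(Σ_{i : a(i)≠0} (a(i) + n − i)) − coinv(a) = Σ_{i=1}^{n} a(i) + inv(a)`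
(positions are 1-based, so position `i : Fin n` is `i+1`). -/
theorem stmt0 (n : ℕ) (a : Fin n → ℕ) (ha : IsRook n a) :
    ((∑ i ∈ Finset.univ.filter (fun i => a i ≠ 0), (a i + n - (i.val + 1)) : ℕ) : ℤ)
        - (rookCoinv n a : ℤ)
      = (∑ i : Fin n, (a i : ℤ)) + (rookInv n a : ℤ) := by
  have hsplit : ∑ i ∈ univ.filter (fun i => a i ≠ 0), (a i + n - (i.val + 1))
      = ∑ i, a i + ∑ i ∈ univ.filter (fun i => a i ≠ 0), (n - (i.val + 1)) := by
    rw [← sum_filter_ne_zero (s := univ) (f := a), ← sum_add_distrib]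
    exact sum_congr rfl fun i _ => by omega
  have hpairs : ∑ i ∈ univ.filter (fun i => a i ≠ 0), (n - (i.val + 1))
      = rookInv n a + rookCoinv n a := by
    rw [← Fin.card_filter_fst_mem_lt, rookInv_add_rookCoinv ha.2]
    simp only [mem_filter, mem_univ, true_and]
  rw [hsplit, hpairs]
  push_cast
  ring
end

section
/- For every set partition A of {1,…,n}, ℓ(φ(A)) = t(A); that is, the length of the strictly upper triangular n-rook associated to A equals the depth-index of A. -/
open scoped Classical

/-- `(i,j)` is an arc of the set partition `P` of `{1,…,n}` (realized on `Fin n`):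
`i < j`, both lie in a common block, and no element of that block is strictly
between `i` and `j`. -/
def IsArc {n : ℕ} (P : Finpartition (Finset.univ : Finset (Fin n))) (i j : Fin n) : Prop :=
  i < j ∧ ∃ b ∈ P.parts, i ∈ b ∧ j ∈ b ∧ ∀ k ∈ b, ¬(i < k ∧ k < j)

/-- The finite set of arcs of a set partition. -/
noncomputable def arcs {n : ℕ} (P : Finpartition (Finset.univ : Finset (Fin n))) :
    Finset (Fin n × Fin n) :=
  Finset.univ.filter (fun p => IsArc P p.1 p.2)

/-- Depth of a vertex `v`: the number of arcs `(r,s)` with `r < v < s`. -/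
noncomputable def depthV {n : ℕ} (P : Finpartition (Finset.univ : Finset (Fin n)))
    (v : Fin n) : ℕ :=
  ((arcs P).filter (fun p => p.1 < v ∧ v < p.2)).card

/-- Depth of an arc `α = (i,j)`: the number of arcs `(r,s)` with `r < i` and `s > j`. -/
noncomputable def depthArc {n : ℕ} (P : Finpartition (Finset.univ : Finset (Fin n)))
    (α : Fin n × Fin n) : ℕ :=
  ((arcs P).filter (fun p => p.1 < α.1 ∧ α.2 < p.2)).card

/-- Depth of a block `b` (with minimum `i` and maximum `j`): the number of arcs
`(r,s)` with `r < i` and `s > j`; equivalently (for the nonempty blocks of a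
partition) the arcs lying strictly above every vertex of `b`. -/
noncomputable def depthBlock {n : ℕ} (P : Finpartition (Finset.univ : Finset (Fin n)))
    (b : Finset (Fin n)) : ℕ :=
  ((arcs P).filter (fun p => ∀ v ∈ b, p.1 < v ∧ v < p.2)).card

/-- Two arcs `(i,j)` and `(r,s)` cross if `i < r < j < s` or `r < i < s < j`. -/
def ArcCross {n : ℕ} (α β : Fin n × Fin n) : Prop :=
  (α.1 < β.1 ∧ β.1 < α.2 ∧ α.2 < β.2) ∨ (β.1 < α.1 ∧ α.1 < β.2 ∧ β.2 < α.2)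

/-- `cross(α)`: the number of blocks of `P` containing at least one arc crossing `α`. -/
noncomputable def crossNum {n : ℕ} (P : Finpartition (Finset.univ : Finset (Fin n)))
    (α : Fin n × Fin n) : ℕ :=
  (P.parts.filter (fun b => ∃ p ∈ arcs P, p.1 ∈ b ∧ p.2 ∈ b ∧ ArcCross α p)).card

/-- The depth-index `t(A) = Σ_{i=1}^{k}(n−i) − Σ_v depth(v) + Σ_α depth(α)`,
where `k` is the number of arcs. -/
noncomputable def tIdx {n : ℕ} (P : Finpartition (Finset.univ : Finset (Fin n))) : ℤ :=
  (∑ i ∈ Finset.range (arcs P).card, ((n : ℤ) - (i + 1)))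
    - (∑ v : Fin n, (depthV P v : ℤ))
    + ∑ α ∈ arcs P, (depthArc P α : ℤ)

/-- The crossing-index `c(A) = Σ_{i=1}^{k}(n−i) − Σ_β depth(β) − Σ_α cross(α)`. -/
noncomputable def cIdx {n : ℕ} (P : Finpartition (Finset.univ : Finset (Fin n))) : ℤ :=
  (∑ i ∈ Finset.range (arcs P).card, ((n : ℤ) - (i + 1)))
    - (∑ b ∈ P.parts, (depthBlock P b : ℤ))
    - ∑ α ∈ arcs P, (crossNum P α : ℤ)

/-- The rook `φ(A)` associated to a set partition: `φ(A)(j) = i` (in 1-based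
values) whenever `(i,j)` is an arc, and `φ(A)(j) = 0` otherwise. Since at most
one arc ends at `j`, the sum below picks out that unique value. -/
noncomputable def phiRook {n : ℕ} (P : Finpartition (Finset.univ : Finset (Fin n))) :
    Fin n → ℕ :=
  fun j => ∑ i : Fin n, if IsArc P i j then i.val + 1 else 0

/-!
Positions are counted from `0`. An arc is determined by its right end, so `φ(A)` is nonzero
exactly on the set `S` of right ends, `#S = k`, and `φ(A)(j) = i + 1` for the arc `(i, j)`.
An inversion `p < q` of `φ(A)` either has `φ(A)(q) = 0`; there are
`Σ_{p ∈ S} (n - 1 - p) - C(k, 2)` of those. Or it has `p, q ∈ S`, and then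
`φ(A)(q) < φ(A)(p)` says that the arc ending at `q` lies above the arc ending at `p`, so these
are counted by `Σ_α depth(α)`. With `Σ_v depth(v) = Σ_{(i,j)} (j - i - 1)`, both sides become
the same expression in the endpoints of the arcs.
-/

open Finset

section Rook

variable {n : ℕ}

lemma card_lt_pairs_fst_ne_zero (a : Fin n → ℕ) :
    #{p : Fin n × Fin n | p.1 < p.2 ∧ a p.1 ≠ 0} =
      ∑ i with a i ≠ 0, (n - 1 - (i : ℕ)) := by
  rw [card_filter, ← univ_product_univ, sum_product, sum_filter]
  refine sum_congr rfl fun i _ => ?_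
  split_ifs with hi
  · simp [hi, filter_lt_eq_Ioi, Fin.card_Ioi]
  · simp [hi]

lemma rookInv_add_choose_rookRank (a : Fin n → ℕ) :
    rookInv n a + (rookRank n a).choose 2 =
      ∑ i with a i ≠ 0, (n - 1 - (i : ℕ)) +
        #{p : Fin n × Fin n | p.1 < p.2 ∧ a p.2 ≠ 0 ∧ a p.2 < a p.1} := by
  have hchoose : (rookRank n a).choose 2 =
      #{p : Fin n × Fin n | p.1 < p.2 ∧ a p.1 ≠ 0 ∧ a p.2 ≠ 0} := by
    rw [rookRank, ← card_product_filter_lt]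
    congr 1
    ext p
    simp only [mem_filter, mem_product, mem_univ, true_and]
    tauto
  rw [hchoose, ← card_lt_pairs_fst_ne_zero, rookInv]
  simp only [card_filter, ← sum_add_distrib]
  refine sum_congr rfl fun p _ => ?_
  split_ifs <;> omega

end Rook

section Partition

variable {n : ℕ}

lemma IsArc.left_unique {P : Finpartition (univ : Finset (Fin n))} {i i' j : Fin n}
    (h : IsArc P i j) (h' : IsArc P i' j) : i = i' := by
  obtain ⟨hij, b, hb, hib, hjb, hb_gap⟩ := h
  obtain ⟨hi'j, b', hb', hi'b', hjb', hb'_gap⟩ := h'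
  obtain rfl : b = b' := P.eq_of_mem_parts hb hb' hjb hjb'
  by_contra hne
  rcases lt_or_gt_of_ne hne with hlt | hgt
  · exact hb_gap i' hi'b' ⟨hlt, hi'j⟩
  · exact hb'_gap i hib ⟨hgt, hij⟩

variable (P : Finpartition (univ : Finset (Fin n)))

lemma mem_arcs {α : Fin n × Fin n} : α ∈ arcs P ↔ IsArc P α.1 α.2 := by
  simp [arcs]

lemma injOn_snd_arcs : Set.InjOn Prod.snd (arcs P : Set (Fin n × Fin n)) := by
  intro α hα β hβ h
  rw [mem_coe, mem_arcs] at hα hβ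
  rw [h] at hα
  exact Prod.ext (hα.left_unique hβ) h

lemma phiRook_of_isArc {i j : Fin n} (h : IsArc P i j) : phiRook P j = i + 1 := by
  rw [phiRook, sum_eq_single_of_mem i (mem_univ i)
    fun i' _ hne => if_neg fun h' => hne (h'.left_unique h), if_pos h]

lemma phiRook_ne_zero_iff {j : Fin n} : phiRook P j ≠ 0 ↔ ∃ i, IsArc P i j := by
  refine ⟨fun h => ?_, fun ⟨i, hi⟩ => by simp [phiRook_of_isArc P hi]⟩
  by_contra! hj
  exact h (sum_eq_zero fun i _ => if_neg (hj i))

lemma filter_phiRook_ne_zero :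
    ({j | phiRook P j ≠ 0} : Finset (Fin n)) = (arcs P).image Prod.snd := by
  ext j
  simp [phiRook_ne_zero_iff, mem_arcs]

lemma rookRank_phiRook : rookRank n (phiRook P) = #(arcs P) := by
  rw [rookRank, filter_phiRook_ne_zero, card_image_of_injOn (injOn_snd_arcs P)]

lemma sum_phiRook : ∑ j, phiRook P j = ∑ α ∈ arcs P, ((α.1 : ℕ) + 1) := by
  unfold phiRook
  rw [sum_comm]
  simp only [arcs, sum_filter, ← univ_product_univ, sum_product]

lemma sum_depthV_add_sum_arcs_fst :
    ∑ v, depthV P v + ∑ α ∈ arcs P, ((α.1 : ℕ) + 1) =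
      ∑ α ∈ arcs P, (α.2 : ℕ) := by
  simp only [depthV, card_filter]
  rw [sum_comm, ← sum_add_distrib]
  refine sum_congr rfl fun α hα => ?_
  have hlt : α.1 < α.2 := ((mem_arcs P).1 hα).1
  have hIoo : ({v | α.1 < v ∧ v < α.2} : Finset (Fin n)) = Ioo α.1 α.2 := by
    ext v
    simp
  rw [← card_filter, hIoo, Fin.card_Ioo]
  omega

lemma card_inversions_phiRook :
    #{p : Fin n × Fin n | p.1 < p.2 ∧ phiRook P p.2 ≠ 0 ∧ phiRook P p.2 < phiRook P p.1} =
      ∑ α ∈ arcs P, depthArc P α := by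
  have hpairs : ∑ α ∈ arcs P, depthArc P α =
      #{x ∈ arcs P ×ˢ arcs P | x.2.1 < x.1.1 ∧ x.1.2 < x.2.2} := by
    simp only [depthArc, card_filter, sum_product]
  rw [hpairs]
  symm
  refine card_bij (fun x _ => (x.1.2, x.2.2)) ?_ ?_ ?_
  · rintro ⟨α, β⟩ hx
    simp only [mem_filter, mem_product, mem_arcs, mem_univ, true_and] at hx ⊢
    obtain ⟨⟨hα, hβ⟩, hnest_left, hnest_right⟩ := hx
    rw [phiRook_of_isArc P hα, phiRook_of_isArc P hβ]
    exact ⟨hnest_right, by omega, by omega⟩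
  · rintro ⟨α, β⟩ hx ⟨α', β'⟩ hx' h
    simp only [mem_filter, mem_product] at hx hx'
    simp only [Prod.mk.injEq] at h ⊢
    exact ⟨injOn_snd_arcs P hx.1.1 hx'.1.1 h.1, injOn_snd_arcs P hx.1.2 hx'.1.2 h.2⟩
  · rintro ⟨p, q⟩ hpq
    simp only [mem_filter, mem_univ, true_and] at hpq
    obtain ⟨hpq, hq, hqp⟩ := hpq
    obtain ⟨j, hj⟩ := (phiRook_ne_zero_iff P).1 hq
    obtain ⟨i, hi⟩ := (phiRook_ne_zero_iff P).1 (by omega : phiRook P p ≠ 0)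
    refine ⟨((i, p), (j, q)), ?_, rfl⟩
    rw [phiRook_of_isArc P hi, phiRook_of_isArc P hj] at hqp
    simp only [mem_filter, mem_product, mem_arcs]
    exact ⟨⟨hi, hj⟩, by omega, hpq⟩

end Partition

lemma sum_range_natCast_sub_succ (n k : ℕ) :
    ∑ i ∈ range k, ((n : ℤ) - (i + 1)) = k * n - k - k.choose 2 := by
  rw [Nat.choose_two_right, ← sum_range_id]
  push_cast
  simp [sum_sub_distrib, sum_add_distrib]
  ring

/-- for every set partition `A` of `{1,…,n}`, the length of the
associated strictly upper triangular `n`-rook equals the depth-index: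
`ℓ(φ(A)) = t(A)`. -/
theorem stmt2 (n : ℕ) (P : Finpartition (Finset.univ : Finset (Fin n))) :
    (rookLen n (phiRook P) : ℤ) = tIdx P := by
  have hinv := rookInv_add_choose_rookRank (phiRook P)
  rw [rookRank_phiRook, filter_phiRook_ne_zero, sum_image (injOn_snd_arcs P),
    card_inversions_phiRook] at hinv
  have hdepth := sum_depthV_add_sum_arcs_fst P
  have hend : ∀ α ∈ arcs P, ((n - 1 - α.2 : ℕ) : ℤ) = n - 1 - α.2 := fun α _ => by
    have := α.2.isLt; omega
  rw [rookLen, tIdx, sum_range_natCast_sub_succ]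
  zify at hinv hdepth
  rw [sum_congr rfl hend] at hinv
  simp only [sum_phiRook, sum_sub_distrib, sum_const, nsmul_eq_mul] at *
  push_cast at *
  linarith
end

section
/- For every set partition A of {1,…,n}: Σ_{arcs α of A} cross(α) = Σ_{v=1}^{n} depth(v) − Σ_{arcs α of A} depth(α) − Σ_{blocks β of A} depth(β). -/
open scoped Classical
/-!
For an arc `p = (x, y)` and a block `b`, the vertices of `b` strictly under `p` are consecutive
in `b`, so every one of them but the first is the right end of an arc of `b` nested under `p`.
The first one is accounted for either by `b` lying entirely under `p` or, otherwise, by an arc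
of `b` crossing `p`: since `x, y ∉ b`, some arc of `b` jumps over `x` or over `y`, and exactly one
of the two alternatives occurs. Summing over the blocks, then over the arcs, and exchanging the
order of summation in the depth sums gives the identity.
-/

open Finset

namespace Finset

variable {α : Type*} [LinearOrder α] {s : Finset α} {a b c t x y : α}

def IsGap (s : Finset α) (a b : α) : Prop :=
  a ∈ s ∧ b ∈ s ∧ a < b ∧ ∀ k ∈ s, ¬(a < k ∧ k < b)

noncomputable def gaps (s : Finset α) : Finset (α × α) :=
  (s ×ˢ s).filter fun g => IsGap s g.1 g.2

lemma mem_gaps {g : α × α} : g ∈ s.gaps ↔ IsGap s g.1 g.2 := by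
  simp only [gaps, mem_filter, mem_product, and_iff_right_iff_imp]
  exact fun h => ⟨h.1, h.2.1⟩

lemma IsGap.left_eq (h : IsGap s a c) (h' : IsGap s b c) : a = b := by
  rcases lt_trichotomy a b with hab | rfl | hba
  · exact (h.2.2.2 b h'.1 ⟨hab, h'.2.2.1⟩).elim
  · rfl
  · exact (h'.2.2.2 a h.1 ⟨hba, h.2.2.1⟩).elim

lemma exists_isGap_of_lt (ha : a ∈ s) (hc : c ∈ s) (hac : a < c) :
    ∃ b, a ≤ b ∧ IsGap s b c := by
  have hne : (s.filter (· < c)).Nonempty := ⟨a, mem_filter.2 ⟨ha, hac⟩⟩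
  obtain ⟨hb, hbc⟩ := mem_filter.1 (max'_mem _ hne)
  refine ⟨_, le_max' _ a (mem_filter.2 ⟨ha, hac⟩), hb, hc, hbc, ?_⟩
  rintro k hk ⟨hbk, hkc⟩
  exact (le_max' _ k (mem_filter.2 ⟨hk, hkc⟩)).not_gt hbk

lemma exists_isGap_straddling (ha : a ∈ s) (hc : c ∈ s) (hat : a ≤ t) (htc : t < c) :
    ∃ g ∈ s.gaps, a ≤ g.1 ∧ g.1 ≤ t ∧ t < g.2 ∧ g.2 ≤ c := by
  have hne : (s.filter (t < ·)).Nonempty := ⟨c, mem_filter.2 ⟨hc, htc⟩⟩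
  obtain ⟨hc', htc'⟩ := mem_filter.1 (min'_mem _ hne)
  obtain ⟨b, hab, hgap⟩ := exists_isGap_of_lt ha hc' (hat.trans_lt htc')
  refine ⟨(b, _), mem_gaps.2 hgap, hab, ?_, htc', min'_le _ c (mem_filter.2 ⟨hc, htc⟩)⟩
  by_contra! hbt
  exact (min'_le _ b (mem_filter.2 ⟨hgap.1, hbt⟩)).not_gt hgap.2.2.1

lemma card_nested_gaps_add_one (h : (s.filter fun v => x < v ∧ v < y).Nonempty) :
    #(s.gaps.filter fun g => x < g.1 ∧ g.2 < y) + 1 = #(s.filter fun v => x < v ∧ v < y) := by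
  set S := s.filter fun v => x < v ∧ v < y
  set m := S.min' h
  obtain ⟨hm, hxm, hmy⟩ := mem_filter.1 (S.min'_mem h)
  have himage : (s.gaps.filter fun g => x < g.1 ∧ g.2 < y).image Prod.snd = S.erase m := by
    ext v
    simp only [mem_image, mem_filter, mem_gaps, mem_erase, S]
    constructor
    · rintro ⟨g, ⟨hg, hxg, hgy⟩, rfl⟩
      have hgS : g.1 ∈ S := mem_filter.2 ⟨hg.1, hxg, hg.2.2.1.trans hgy⟩
      exact ⟨(S.min'_le _ hgS).trans_lt hg.2.2.1 |>.ne', hg.2.1, hxg.trans hg.2.2.1, hgy⟩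
    · rintro ⟨hvm, hv, hxv, hvy⟩
      have hmv : m < v := (S.min'_le v (mem_filter.2 ⟨hv, hxv, hvy⟩)).lt_of_ne hvm.symm
      obtain ⟨b, hmb, hgap⟩ := exists_isGap_of_lt hm hv hmv
      exact ⟨(b, v), ⟨hgap, hxm.trans_le hmb, hvy⟩, rfl⟩
  have hinj : Set.InjOn Prod.snd (s.gaps.filter fun g => x < g.1 ∧ g.2 < y : Set (α × α)) := by
    intro g hg g' hg' heq
    have hg := mem_gaps.1 (mem_filter.1 hg).1
    have hg' := mem_gaps.1 (mem_filter.1 hg').1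
    exact Prod.ext (hg.left_eq (heq ▸ hg')) heq
  rw [← card_image_of_injOn hinj, himage, card_erase_add_one (S.min'_mem h)]

lemma exists_crossing_gap_iff (hx : x ∉ s) (hy : y ∉ s) (h : ∃ v ∈ s, x < v ∧ v < y) :
    (∃ g ∈ s.gaps, (x < g.1 ∧ g.1 < y ∧ y < g.2) ∨ (g.1 < x ∧ x < g.2 ∧ g.2 < y)) ↔
      ¬∀ v ∈ s, x < v ∧ v < y := by
  obtain ⟨v, hv, hxv, hvy⟩ := h
  constructor
  · rintro ⟨g, hg, ⟨-, -, hyg⟩ | ⟨hgx, -, -⟩⟩ hall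
    · exact (hall g.2 (mem_gaps.1 hg).2.1).2.not_gt hyg
    · exact (hall g.1 (mem_gaps.1 hg).1).1.not_gt hgx
  · intro hall
    push Not at hall
    obtain ⟨u, hu, hout⟩ := hall
    have hux : u ≠ x := by rintro rfl; exact hx hu
    have huy : u ≠ y := by rintro rfl; exact hy hu
    rcases lt_or_gt_of_ne hux with hux | hxu
    · obtain ⟨g, hg, -, hgx, hxg, hgv⟩ := exists_isGap_straddling hu hv hux.le hxv
      have hgx : g.1 < x := hgx.lt_of_ne fun h => hx (h ▸ (mem_gaps.1 hg).1)
      exact ⟨g, hg, Or.inr ⟨hgx, hxg, hgv.trans_lt hvy⟩⟩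
    · have hyu : y < u := (hout hxu).lt_of_ne huy.symm
      obtain ⟨g, hg, hvg, hgy, hyg, -⟩ := exists_isGap_straddling hv hu hvy.le hyu
      have hgy : g.1 < y := hgy.lt_of_ne fun h => hy (h ▸ (mem_gaps.1 hg).1)
      exact ⟨g, hg, Or.inl ⟨hxv.trans_le hvg, hgy, hyg⟩⟩

theorem card_filter_between (hs : s.Nonempty) (hxy : IsGap s x y ∨ x ∉ s ∧ y ∉ s) :
    #(s.filter fun v => x < v ∧ v < y) =
      #(s.gaps.filter fun g => x < g.1 ∧ g.2 < y) +
        ((if ∀ v ∈ s, x < v ∧ v < y then 1 else 0) +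
          if ∃ g ∈ s.gaps, (x < g.1 ∧ g.1 < y ∧ y < g.2) ∨ (g.1 < x ∧ x < g.2 ∧ g.2 < y)
          then 1 else 0) := by
  by_cases hS : ∃ v ∈ s, x < v ∧ v < y
  · have hout : x ∉ s ∧ y ∉ s := by
      obtain ⟨v, hv, hxv, hvy⟩ := hS
      exact hxy.resolve_left fun hgap => hgap.2.2.2 v hv ⟨hxv, hvy⟩
    rw [← card_nested_gaps_add_one (by simpa [Finset.Nonempty] using hS)]
    by_cases hall : ∀ v ∈ s, x < v ∧ v < y
    · rw [if_pos hall, if_neg ((exists_crossing_gap_iff hout.1 hout.2 hS).not_left.2 hall)]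
    · rw [if_neg hall, if_pos ((exists_crossing_gap_iff hout.1 hout.2 hS).2 hall)]
  · push Not at hS
    have hnested : s.gaps.filter (fun g => x < g.1 ∧ g.2 < y) = ∅ :=
      filter_eq_empty_iff.2 fun g hg ⟨hxg, hgy⟩ =>
        (hS g.1 (mem_gaps.1 hg).1 hxg).not_gt ((mem_gaps.1 hg).2.2.1.trans hgy)
    have hall : ¬∀ v ∈ s, x < v ∧ v < y := fun hall =>
      have ⟨v, hv⟩ := hs
      (hS v hv (hall v hv).1).not_gt (hall v hv).2
    have hcross :
        ¬∃ g ∈ s.gaps, (x < g.1 ∧ g.1 < y ∧ y < g.2) ∨ (g.1 < x ∧ x < g.2 ∧ g.2 < y) := by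
      rintro ⟨g, hg, ⟨hxg, hgy, -⟩ | ⟨-, hxg, hgy⟩⟩
      · exact (hS g.1 (mem_gaps.1 hg).1 hxg).not_gt hgy
      · exact (hS g.2 (mem_gaps.1 hg).2.1 hxg).not_gt hgy
    rw [hnested, if_neg hall, if_neg hcross, filter_eq_empty_iff.2 fun v hv ⟨hxv, hvy⟩ =>
      (hS v hv hxv).not_gt hvy]
    rfl

end Finset

lemma Finpartition.card_filter_eq_sum {α : Type*} [DecidableEq α] {s : Finset α}
    (P : Finpartition s) (q : α → Prop) [DecidablePred q] :
    #(s.filter q) = ∑ b ∈ P.parts, #(b.filter q) := by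
  conv_lhs => rw [← P.biUnion_parts]
  rw [filter_biUnion,
    card_biUnion fun b hb c hc hbc => disjoint_filter_filter (P.disjoint hb hc hbc)]
  rfl

section SetPartition

variable {n : ℕ} (P : Finpartition (univ : Finset (Fin n))) {p : Fin n × Fin n}
  {b : Finset (Fin n)}

lemma mem_arcs_iff : p ∈ arcs P ↔ ∃ b ∈ P.parts, IsGap b p.1 p.2 := by
  rw [arcs, mem_filter]
  simp only [mem_univ, true_and, IsArc, IsGap]
  constructor
  · rintro ⟨hlt, b, hb, h₁, h₂, hgap⟩
    exact ⟨b, hb, h₁, h₂, hlt, hgap⟩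
  · rintro ⟨b, hb, h₁, h₂, hlt, hgap⟩
    exact ⟨hlt, b, hb, h₁, h₂, hgap⟩

lemma isGap_or_not_mem (hp : p ∈ arcs P) (hb : b ∈ P.parts) :
    IsGap b p.1 p.2 ∨ p.1 ∉ b ∧ p.2 ∉ b := by
  obtain ⟨c, hc, hgap⟩ := (mem_arcs_iff P).1 hp
  by_cases hbc : b = c
  · exact Or.inl (hbc ▸ hgap)
  · exact Or.inr ⟨fun h => hbc (P.eq_of_mem_parts hb hc h hgap.1),
      fun h => hbc (P.eq_of_mem_parts hb hc h hgap.2.1)⟩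

lemma mem_gaps_iff_of_mem_parts (hb : b ∈ P.parts) :
    p ∈ b.gaps ↔ p ∈ arcs P ∧ p.1 ∈ b ∧ p.2 ∈ b := by
  refine ⟨fun hp => ⟨(mem_arcs_iff P).2 ⟨b, hb, mem_gaps.1 hp⟩, (mem_gaps.1 hp).1,
    (mem_gaps.1 hp).2.1⟩, ?_⟩
  rintro ⟨hp, hpb, -⟩
  exact mem_gaps.2 ((isGap_or_not_mem P hp hb).resolve_right fun h => h.1 hpb)

lemma arcs_eq_biUnion_gaps : arcs P = P.parts.biUnion gaps := by
  ext p
  simp only [mem_biUnion, mem_gaps, mem_arcs_iff]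

lemma card_filter_arcs (q : Fin n × Fin n → Prop) [DecidablePred q] :
    #((arcs P).filter q) = ∑ b ∈ P.parts, #(b.gaps.filter q) := by
  rw [arcs_eq_biUnion_gaps, filter_biUnion, card_biUnion]
  intro b hb c hc hbc
  refine disjoint_filter_filter (disjoint_left.2 fun g hgb hgc => ?_)
  exact hbc (P.eq_of_mem_parts hb hc (mem_gaps.1 hgb).1 (mem_gaps.1 hgc).1)

lemma crossNum_eq_card_filter_gaps (p : Fin n × Fin n) :
    crossNum P p = #(P.parts.filter fun b => ∃ g ∈ b.gaps, ArcCross p g) := by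
  unfold crossNum
  congr 1
  refine filter_congr fun b hb => ?_
  simp only [mem_gaps_iff_of_mem_parts P hb, and_assoc]

lemma card_filter_between_arc (hp : p ∈ arcs P) :
    #(univ.filter fun v => p.1 < v ∧ v < p.2) =
      #((arcs P).filter fun α => p.1 < α.1 ∧ α.2 < p.2) +
        (#(P.parts.filter fun b => ∀ v ∈ b, p.1 < v ∧ v < p.2) + crossNum P p) := by
  rw [P.card_filter_eq_sum, card_filter_arcs, crossNum_eq_card_filter_gaps,
    card_filter, card_filter, ← sum_add_distrib, ← sum_add_distrib]
  refine sum_congr rfl fun b hb => ?_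
  have := card_filter_between (P.nonempty_of_mem_parts hb) (isGap_or_not_mem P hp hb)
  simp only [ArcCross]
  -- the two sides differ only in their `LT` and `Decidable` instances
  convert this using 3 <;> congr

end SetPartition

/-- for every set partition `A` of `{1,…,n}`,
`Σ_α cross(α) = Σ_v depth(v) − Σ_α depth(α) − Σ_β depth(β)`, summing over
arcs `α`, vertices `v` and blocks `β` of `A`. -/
theorem stmt3 (n : ℕ) (P : Finpartition (Finset.univ : Finset (Fin n))) :
    (∑ α ∈ arcs P, (crossNum P α : ℤ))
      = (∑ v : Fin n, (depthV P v : ℤ)) - (∑ α ∈ arcs P, (depthArc P α : ℤ))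
          - ∑ b ∈ P.parts, (depthBlock P b : ℤ) := by
  have hdepthV : ∑ v, depthV P v = ∑ p ∈ arcs P, #(univ.filter fun v => p.1 < v ∧ v < p.2) :=
    sum_card_bipartiteAbove_eq_sum_card_bipartiteBelow
      fun (v : Fin n) (p : Fin n × Fin n) => p.1 < v ∧ v < p.2
  have hdepthArc : ∑ α ∈ arcs P, depthArc P α =
      ∑ p ∈ arcs P, #((arcs P).filter fun α => p.1 < α.1 ∧ α.2 < p.2) :=
    sum_card_bipartiteAbove_eq_sum_card_bipartiteBelow
      fun (α p : Fin n × Fin n) => p.1 < α.1 ∧ α.2 < p.2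
  have hdepthBlock : ∑ b ∈ P.parts, depthBlock P b =
      ∑ p ∈ arcs P, #(P.parts.filter fun b => ∀ v ∈ b, p.1 < v ∧ v < p.2) :=
    sum_card_bipartiteAbove_eq_sum_card_bipartiteBelow
      fun (b : Finset (Fin n)) (p : Fin n × Fin n) => ∀ v ∈ b, p.1 < v ∧ v < p.2
  have h : ∑ v, depthV P v = ∑ α ∈ arcs P, depthArc P α +
      (∑ b ∈ P.parts, depthBlock P b + ∑ α ∈ arcs P, crossNum P α) := by
    rw [hdepthV, hdepthArc, hdepthBlock, ← sum_add_distrib, ← sum_add_distrib]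
    exact sum_congr rfl fun p hp => card_filter_between_arc P hp
  rw [← Nat.cast_sum, ← Nat.cast_sum, ← Nat.cast_sum, ← Nat.cast_sum, h]
  push_cast
  ring
end

section
/- The map φ is a bijection from the set of all set partitions of {1,…,n} onto the set of strictly upper triangular n-rooks; moreover, a set partition A has exactly b blocks if and only if the n-rook φ(A) has rank n − b. -/
open scoped Classical

/-!
`φ(P) j = i + 1` holds exactly when `(i, j)` is an arc of `P`, and a block is connected by its
arcs (each non-minimal element is joined to the largest smaller element of its block), so `P` is
the partition generated by the arcs of `φ(P)`; this gives injectivity.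

For a strictly upper triangular rook `a`, the relation `a j = i + 1` has unique predecessors
(values are determined) and unique successors (nonzero values are distinct). Hence any two
elements of an equivalence class of the generated relation lie on one increasing chain of such
steps, and the arcs of the class are exactly its steps, so the generated partition is mapped to
`a` by `φ`. Finally, the vacant positions of `φ(P)` are exactly the minima of the blocks.
-/

open Relation

theorem Relation.EqvGen.reflTransGen_or_reflTransGen {α : Type*} {r : α → α → Prop}
    (hl : Relator.LeftUnique r) (hr : Relator.RightUnique r) {a b : α} (h : EqvGen r a b) :
    ReflTransGen r a b ∨ ReflTransGen r b a := by
  induction h with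
  | rel x y hxy => exact .inl (.single hxy)
  | refl x => exact .inl .refl
  | symm x y _ ih => exact ih.symm
  | trans x y z _ _ ihxy ihyz =>
    rcases ihxy with hxy | hyx <;> rcases ihyz with hyz | hzy
    · exact .inl (hxy.trans hyz)
    · exact (ReflTransGen.total_of_right_unique (r := Function.swap r)
        (fun _ _ _ hb hc => hl hb hc) (reflTransGen_swap.2 hxy)
        (reflTransGen_swap.2 hzy)).symm.imp reflTransGen_swap.1 reflTransGen_swap.1
    · exact ReflTransGen.total_of_right_unique hr hyx hyz
    · exact .inr (hzy.trans hyx)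

theorem Finpartition.parts_eq_image_part {α : Type*} [DecidableEq α] {s : Finset α}
    (P : Finpartition s) : P.parts = s.image P.part := by
  ext t
  simp only [Finset.mem_image]
  constructor
  · intro ht
    obtain ⟨a, ha, rfl⟩ := P.part_surjOn ht
    exact ⟨a, ha, rfl⟩
  · rintro ⟨a, ha, rfl⟩
    exact P.part_mem.2 ha

theorem Finpartition.ext_part {α : Type*} [DecidableEq α] {s : Finset α} {P Q : Finpartition s}
    (h : ∀ a, P.part a = Q.part a) : P = Q := by
  ext1
  rw [P.parts_eq_image_part, Q.parts_eq_image_part, funext h]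

section SetPartition

variable {n : ℕ} {P : Finpartition (Finset.univ : Finset (Fin n))} {i j k : Fin n}

theorem isArc_iff_mem_part :
    IsArc P i j ↔ i < j ∧ i ∈ P.part j ∧ ∀ k ∈ P.part j, ¬(i < k ∧ k < j) := by
  constructor
  · rintro ⟨hij, b, hb, hib, hjb, hgap⟩
    rw [P.part_eq_of_mem hb hjb]
    exact ⟨hij, hib, hgap⟩
  · rintro ⟨hij, hi, hgap⟩
    exact ⟨hij, P.part j, P.part_mem.2 (Finset.mem_univ j), hi,
      P.mem_part (Finset.mem_univ j), hgap⟩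

theorem IsArc.mem_part (h : IsArc P i j) : i ∈ P.part j :=
  (isArc_iff_mem_part.1 h).2.1

theorem IsArc.le_left_of_mem_part (h : IsArc P i j) (hk : k ∈ P.part j) (hkj : k < j) : k ≤ i :=
  not_lt.1 fun hik => (isArc_iff_mem_part.1 h).2.2 k hk ⟨hik, hkj⟩

theorem IsArc.right_le_of_mem_part (h : IsArc P i j) (hk : k ∈ P.part j) (hik : i < k) :
    j ≤ k :=
  not_lt.1 fun hkj => (isArc_iff_mem_part.1 h).2.2 k hk ⟨hik, hkj⟩

theorem IsArc.part_eq (h : IsArc P i j) : P.part i = P.part j :=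
  P.part_eq_of_mem (P.part_mem.2 (Finset.mem_univ j)) h.mem_part

theorem IsArc.left_unique_s5 : Relator.LeftUnique (IsArc P) := fun _ _ _ hi hk =>
  le_antisymm (hk.le_left_of_mem_part hi.mem_part hi.1) (hi.le_left_of_mem_part hk.mem_part hk.1)

theorem IsArc.right_unique : Relator.RightUnique (IsArc P) := by
  intro i j k hj hk
  have mem_part_of_arcs {j k} (hj : IsArc P i j) (hk : IsArc P i k) : j ∈ P.part k := by
    rw [← hk.part_eq, hj.part_eq]
    exact P.mem_part (Finset.mem_univ j)
  exact le_antisymm (hj.right_le_of_mem_part (mem_part_of_arcs hk hj) hk.1)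
    (hk.right_le_of_mem_part (mem_part_of_arcs hj hk) hj.1)

/-- The arc ending at `j` starts at the largest element of its block below `j`. -/
theorem exists_isArc_of_mem_part_of_lt (hk : k ∈ P.part j) (hkj : k < j) :
    ∃ i, k ≤ i ∧ IsArc P i j := by
  set below := (P.part j).filter (· < j)
  have hne : below.Nonempty := ⟨k, Finset.mem_filter.2 ⟨hk, hkj⟩⟩
  obtain ⟨hi, hij⟩ := Finset.mem_filter.1 (below.max'_mem hne)
  refine ⟨below.max' hne, below.le_max' k (Finset.mem_filter.2 ⟨hk, hkj⟩),
    isArc_iff_mem_part.2 ⟨hij, hi, fun z hz ⟨hlt, hzj⟩ => ?_⟩⟩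
  exact (below.le_max' z (Finset.mem_filter.2 ⟨hz, hzj⟩)).not_gt hlt

end SetPartition

section PhiRook

variable {n : ℕ} {P : Finpartition (Finset.univ : Finset (Fin n))} {i j : Fin n}

theorem phiRook_eq_of_isArc (h : IsArc P i j) : phiRook P j = i.val + 1 := by
  rw [phiRook, Finset.sum_eq_single_of_mem i (Finset.mem_univ i)
    fun k _ hki => if_neg fun hk => hki (IsArc.left_unique_s5 hk h), if_pos h]

theorem exists_isArc_of_phiRook_ne_zero (h : phiRook P j ≠ 0) : ∃ i, IsArc P i j := by
  by_contra! hno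
  exact h (Finset.sum_eq_zero fun i _ => if_neg (hno i))

theorem phiRook_eq_succ_iff : phiRook P j = i.val + 1 ↔ IsArc P i j := by
  refine ⟨fun h => ?_, phiRook_eq_of_isArc⟩
  obtain ⟨k, hk⟩ := exists_isArc_of_phiRook_ne_zero (P := P) (j := j) (by omega)
  rw [phiRook_eq_of_isArc hk, Nat.succ_inj, Fin.val_inj] at h
  exact h ▸ hk

theorem phiRook_le (P : Finpartition (Finset.univ : Finset (Fin n))) (j : Fin n) :
    phiRook P j ≤ j.val := by
  by_cases h : phiRook P j = 0
  · exact h ▸ Nat.zero_le _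
  · obtain ⟨i, hi⟩ := exists_isArc_of_phiRook_ne_zero h
    exact (phiRook_eq_of_isArc hi).trans_le hi.1

theorem isRook_phiRook (P : Finpartition (Finset.univ : Finset (Fin n))) :
    IsRook n (phiRook P) := by
  refine ⟨fun j => (phiRook_le P j).trans j.isLt.le, fun j k hj hjk => ?_⟩
  obtain ⟨i, hi⟩ := exists_isArc_of_phiRook_ne_zero hj
  rw [phiRook_eq_of_isArc hi, eq_comm, phiRook_eq_succ_iff] at hjk
  exact IsArc.right_unique hi hjk

theorem phiRook_eq_zero_iff : phiRook P j = 0 ↔ ∀ k ∈ P.part j, j ≤ k := by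
  constructor
  · intro h k hk
    by_contra! hkj
    obtain ⟨i, -, hi⟩ := exists_isArc_of_mem_part_of_lt hk hkj
    exact Nat.succ_ne_zero _ ((phiRook_eq_of_isArc hi).symm.trans h)
  · intro hmin
    by_contra h
    obtain ⟨i, hi⟩ := exists_isArc_of_phiRook_ne_zero h
    exact (hmin i hi.mem_part).not_gt hi.1

end PhiRook

section Blocks

variable {n : ℕ} {P : Finpartition (Finset.univ : Finset (Fin n))}

theorem eqvGen_isArc_of_part_eq_of_le (y : Fin n) :
    ∀ x ≤ y, P.part x = P.part y → EqvGen (IsArc P) x y := by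
  induction y using WellFoundedLT.induction with
  | _ y ih =>
  intro x hxy hpart
  rcases hxy.eq_or_lt with rfl | hlt
  · exact .refl x
  have hx : x ∈ P.part y := hpart ▸ P.mem_part (Finset.mem_univ x)
  obtain ⟨i, hxi, hi⟩ := exists_isArc_of_mem_part_of_lt hx hlt
  exact .trans _ _ _ (ih i hi.1 x hxi (hpart.trans hi.part_eq.symm)) (.rel _ _ hi)

theorem part_eq_part_iff_eqvGen_isArc {x y : Fin n} :
    P.part x = P.part y ↔ EqvGen (IsArc P) x y := by
  constructor
  · intro h
    rcases le_total x y with hxy | hyx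
    · exact eqvGen_isArc_of_part_eq_of_le y x hxy h
    · exact .symm _ _ (eqvGen_isArc_of_part_eq_of_le x y hyx h.symm)
  · intro h
    induction h with
    | rel x y hxy => exact hxy.part_eq
    | refl x => rfl
    | symm x y _ ih => exact ih.symm
    | trans x y z _ _ ihxy ihyz => exact ihxy.trans ihyz

end Blocks

section RookPartition

variable {n : ℕ} {a : Fin n → ℕ} {i j k : Fin n}

/-- `(i, j)` is an arc of the rook `a`; values of `a` are 1-based, whence the `+ 1`. -/
def IsRookArc (a : Fin n → ℕ) (i j : Fin n) : Prop :=
  a j = i.val + 1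

noncomputable def rookPartition (a : Fin n → ℕ) : Finpartition (Finset.univ : Finset (Fin n)) :=
  Finpartition.ofSetoid (EqvGen.setoid (IsRookArc a))

theorem mem_part_rookPartition_iff : k ∈ (rookPartition a).part j ↔ EqvGen (IsRookArc a) j k :=
  Finpartition.mem_part_ofSetoid_iff_rel

theorem isRookArc_phiRook (P : Finpartition (Finset.univ : Finset (Fin n))) :
    IsRookArc (phiRook P) = IsArc P := by
  ext i j
  exact phiRook_eq_succ_iff

theorem rookPartition_phiRook (P : Finpartition (Finset.univ : Finset (Fin n))) :
    rookPartition (phiRook P) = P := by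
  refine Finpartition.ext_part fun x => Finset.ext fun y => ?_
  rw [mem_part_rookPartition_iff, isRookArc_phiRook, ← part_eq_part_iff_eqvGen_isArc, eq_comm,
    P.mem_part_iff_part_eq_part (Finset.mem_univ y) (Finset.mem_univ x)]

theorem IsRookArc.mem_part_rookPartition (h : IsRookArc a i j) : i ∈ (rookPartition a).part j :=
  mem_part_rookPartition_iff.2 (.symm _ _ (.rel _ _ h))

theorem IsRookArc.left_unique_s5 : Relator.LeftUnique (IsRookArc a) := fun _ _ _ hi hk =>
  Fin.ext (by unfold IsRookArc at hi hk; omega)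

theorem IsRookArc.right_unique (hinj : ∀ i j, a i ≠ 0 → a i = a j → i = j) :
    Relator.RightUnique (IsRookArc a) := fun _ j k hj hk =>
  hinj j k (by unfold IsRookArc at hj; omega) (hj.trans hk.symm)

theorem IsRookArc.lt (htri : ∀ i : Fin n, a i < i.val + 1) (h : IsRookArc a i j) : i < j := by
  have := htri j
  unfold IsRookArc at h
  exact Fin.lt_def.2 (by omega)

theorem le_of_reflTransGen_isRookArc (htri : ∀ i : Fin n, a i < i.val + 1)
    (h : ReflTransGen (IsRookArc a) i j) : i ≤ j := by
  induction h with
  | refl => exact le_rfl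
  | tail _ hjk ih => exact ih.trans (hjk.lt htri).le

section

variable (hinj : ∀ i j, a i ≠ 0 → a i = a j → i = j) (htri : ∀ i : Fin n, a i < i.val + 1)
include hinj htri

theorem exists_isRookArc_of_mem_part_of_lt (hk : k ∈ (rookPartition a).part j) (hkj : k < j) :
    ∃ i, k ≤ i ∧ IsRookArc a i j := by
  rcases (mem_part_rookPartition_iff.1 hk).reflTransGen_or_reflTransGen IsRookArc.left_unique_s5
    (IsRookArc.right_unique hinj) with hjk | hkj_chain
  · exact absurd (le_of_reflTransGen_isRookArc htri hjk) hkj.not_ge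
  · rcases hkj_chain.cases_tail with rfl | ⟨i, hki, hij⟩
    · exact absurd hkj (lt_irrefl j)
    · exact ⟨i, le_of_reflTransGen_isRookArc htri hki, hij⟩

theorem isArc_rookPartition_iff : IsArc (rookPartition a) i j ↔ IsRookArc a i j := by
  constructor
  · intro h
    obtain ⟨k, hik, hkj⟩ := exists_isRookArc_of_mem_part_of_lt hinj htri h.mem_part h.1
    rwa [le_antisymm hik (h.le_left_of_mem_part hkj.mem_part_rookPartition (hkj.lt htri))]
  · intro h
    refine isArc_iff_mem_part.2 ⟨h.lt htri, h.mem_part_rookPartition,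
      fun z hz ⟨hiz, hzj⟩ => ?_⟩
    obtain ⟨k, hzk, hkj⟩ := exists_isRookArc_of_mem_part_of_lt hinj htri hz hzj
    exact (hzk.trans_eq (IsRookArc.left_unique_s5 hkj h)).not_gt hiz

theorem phiRook_rookPartition : phiRook (rookPartition a) = a := by
  funext j
  by_cases h : a j = 0
  · by_contra hne
    obtain ⟨i, hi⟩ := exists_isArc_of_phiRook_ne_zero (h ▸ hne)
    exact absurd ((isArc_rookPartition_iff hinj htri).1 hi) (by unfold IsRookArc; omega)
  · have hlt := htri j
    have harc : IsRookArc a ⟨a j - 1, by omega⟩ j := by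
      unfold IsRookArc
      simp only
      omega
    exact (phiRook_eq_of_isArc ((isArc_rookPartition_iff hinj htri).2 harc)).trans harc.symm

end

end RookPartition

theorem rookRank_phiRook_add_card_parts {n : ℕ}
    (P : Finpartition (Finset.univ : Finset (Fin n))) :
    rookRank n (phiRook P) + P.parts.card = n := by
  have hvacant : (Finset.univ.filter fun j => ¬phiRook P j ≠ 0).card = P.parts.card := by
    refine Finset.card_nbij P.part (fun j _ => P.part_mem.2 (Finset.mem_univ j)) ?_ ?_
    · intro j hj j' hj' hpart
      simp only [Finset.coe_filter, not_not, Set.mem_ofPred_eq, Finset.mem_univ, true_and,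
        phiRook_eq_zero_iff] at hj hj'
      exact le_antisymm (hj j' (hpart ▸ P.mem_part (Finset.mem_univ j')))
        (hj' j (hpart ▸ P.mem_part (Finset.mem_univ j)))
    · intro b hb
      have hne := P.nonempty_of_mem_parts hb
      have hpart : P.part (b.min' hne) = b := P.part_eq_of_mem hb (b.min'_mem hne)
      refine ⟨b.min' hne, ?_, hpart⟩
      simp only [Finset.coe_filter, not_not, Set.mem_ofPred_eq, Finset.mem_univ, true_and,
        phiRook_eq_zero_iff, hpart]
      exact fun k => b.min'_le k
  rw [rookRank, ← hvacant, Finset.card_filter_add_card_filter_not, Finset.card_univ,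
    Fintype.card_fin]

/-- `φ` is a bijection from the set partitions of `{1,…,n}` onto
the strictly upper triangular `n`-rooks (those with `a(i) < i` for all `i`,
i.e. `a i < i + 1` in 0-based positions), and `A` has exactly `b` blocks iff
`φ(A)` has rank `n − b`. -/
theorem stmt5 (n : ℕ) :
    (∀ P : Finpartition (Finset.univ : Finset (Fin n)),
        IsRook n (phiRook P) ∧ ∀ i : Fin n, phiRook P i < i.val + 1) ∧
    (∀ P Q : Finpartition (Finset.univ : Finset (Fin n)),
        phiRook P = phiRook Q → P = Q) ∧
    (∀ a : Fin n → ℕ, IsRook n a → (∀ i : Fin n, a i < i.val + 1) →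
        ∃ P : Finpartition (Finset.univ : Finset (Fin n)), phiRook P = a) ∧
    (∀ P : Finpartition (Finset.univ : Finset (Fin n)), ∀ b : ℕ, b ≤ n →
        (P.parts.card = b ↔ rookRank n (phiRook P) = n - b)) := by
  refine ⟨fun P => ⟨isRook_phiRook P, fun i => Nat.lt_succ_of_le (phiRook_le P i)⟩,
    fun P Q h => ?_, fun a ha htri => ⟨rookPartition a, phiRook_rookPartition ha.2 htri⟩,
    fun P b _ => ?_⟩
  · rw [← rookPartition_phiRook P, h, rookPartition_phiRook]
  · have := rookRank_phiRook_add_card_parts P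
    omega
end

section
/- Fix 0 ≤ k ≤ n and let e₀ be the n-rook with e₀(i) = 0 for 1 ≤ i ≤ n−k and e₀(n−k+j) = j for 1 ≤ j ≤ k. Then e₀ belongs to P_{n,k} and e₀ ≤ x in the Bruhat–Chevalley–Renner order for every x ∈ P_{n,k}; that is, e₀ is the unique minimum of the poset P_{n,k}. -/
/-!
Induct on the length `ℓ(x) = Σ x(i) + inv(x)`. If `x ∈ P_{n,k}` has an adjacent descent
`x(a) > x(a+1)`, swapping these two entries is a relation of type (2) below `x` that stays in
`P_{n,k}` and removes exactly the inversion `(a, a+1)`. Otherwise `x` is weakly increasing, so its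
`k` nonzero entries fill the last `k` positions and increase strictly, which forces `e₀ ≤ x`
pointwise; lowering the first entry where `x` differs from `e₀` to the value of `e₀` is a relation
of type (1) that stays in `P_{n,k}` and decreases `Σ x(i)`.
-/

open scoped Classical

/-- The generating relations of the Bruhat–Chevalley–Renner order on `n`-rooks. -/
def BCRStep (n : ℕ) (a b : Fin n → ℕ) : Prop :=
  IsRook n a ∧ IsRook n b ∧
  ((∃ i, a i < b i ∧ ∀ j, j ≠ i → a j = b j) ∨
   (∃ i j : Fin n, i < j ∧ b i = a j ∧ b j = a i ∧ b j < b i ∧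
      ∀ m, m ≠ i → m ≠ j → a m = b m))

/-- The Bruhat–Chevalley–Renner order: the partial order on `n`-rooks generated by
the relations `BCRStep`. -/
def BCRle (n : ℕ) : (Fin n → ℕ) → (Fin n → ℕ) → Prop :=
  Relation.ReflTransGen (BCRStep n)

/-- The rook `e₀`. -/
def minRook (n k : ℕ) : Fin n → ℕ :=
  fun i => if i.val + 1 ≤ n - k then 0 else i.val + 1 - (n - k)

/-- The poset `P_{n,k}`. -/
def upperRooks (n k : ℕ) : Set (Fin n → ℕ) :=
  {x | IsRook n x ∧ (∀ i : Fin n, x i ≤ i.val + 1) ∧ rookRank n x = k}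

section MinRook

variable {n k : ℕ}

lemma isRook_minRook : IsRook n (minRook n k) := by
  refine ⟨fun i => ?_, fun i j hi hij => Fin.ext ?_⟩ <;> simp only [minRook] at * <;>
    split_ifs at * <;> omega

lemma minRook_le_succ (i : Fin n) : minRook n k i ≤ i.val + 1 := by
  unfold minRook; split_ifs <;> omega

lemma minRook_ne_zero_iff (i : Fin n) : minRook n k i ≠ 0 ↔ n - k ≤ i.val := by
  unfold minRook; split_ifs <;> omega

lemma rookRank_minRook (hk : k ≤ n) : rookRank n (minRook n k) = k := by
  have hsplit := Finset.card_filter_add_card_filter_not (s := Finset.univ)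
    (fun i : Fin n => (i : ℕ) < n - k)
  simp only [Fin.card_filter_val_lt, not_lt, Finset.card_univ, Fintype.card_fin] at hsplit
  simp only [rookRank, minRook_ne_zero_iff]
  omega

lemma minRook_mem_upperRooks (hk : k ≤ n) : minRook n k ∈ upperRooks n k :=
  ⟨isRook_minRook, minRook_le_succ, rookRank_minRook hk⟩

lemma minRook_lt_minRook {p q : Fin n} (hqp : q < p) (hp : minRook n k p ≠ 0) :
    minRook n k q < minRook n k p := by
  rw [minRook_ne_zero_iff] at hp
  have : q.val < p.val := hqp
  unfold minRook; split_ifs <;> omega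

end MinRook

lemma Equiv.swap_lt_swap_of_covBy {α : Type*} [LinearOrder α] {a b c d : α} (hab : a ⋖ b)
    (hcd : c < d) (hne : (c, d) ≠ (a, b)) : Equiv.swap a b c < Equiv.swap a b d := by
  have hcov {e} (hae : a < e) (heb : e ≠ b) : b < e := (hab.ge_of_gt hae).lt_of_ne' heb
  have hcov' {e} (heb : e < b) (hae : e ≠ a) : e < a := (hab.le_of_lt heb).lt_of_ne hae
  rcases eq_or_ne c a with rfl | hca
  · have hdb : d ≠ b := fun h => hne (by rw [h])
    rw [Equiv.swap_apply_left, Equiv.swap_apply_of_ne_of_ne hcd.ne' hdb]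
    exact hcov hcd hdb
  rcases eq_or_ne c b with rfl | hcb
  · rw [Equiv.swap_apply_right, Equiv.swap_apply_of_ne_of_ne (hab.lt.trans hcd).ne' hcd.ne']
    exact (hab.lt.trans hcd)
  rw [Equiv.swap_apply_of_ne_of_ne hca hcb]
  rcases eq_or_ne d a with rfl | hda
  · rw [Equiv.swap_apply_left]; exact hcd.trans hab.lt
  rcases eq_or_ne d b with rfl | hdb
  · rw [Equiv.swap_apply_right]; exact hcov' hcd hca
  rwa [Equiv.swap_apply_of_ne_of_ne hda hdb]

section Swap

variable {n : ℕ} {x : Fin n → ℕ}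

lemma IsRook.comp_perm (hx : IsRook n x) (σ : Equiv.Perm (Fin n)) : IsRook n (x ∘ σ) :=
  ⟨fun i => hx.1 (σ i), fun _ _ hi hij => σ.injective (hx.2 _ _ hi hij)⟩

lemma rookRank_comp_perm (σ : Equiv.Perm (Fin n)) : rookRank n (x ∘ σ) = rookRank n x :=
  Finset.card_equiv σ (by simp)

lemma rookInv_comp_swap_lt {a b : Fin n} (hab : a ⋖ b) (hdesc : x b < x a) :
    rookInv n (x ∘ Equiv.swap a b) < rookInv n x := by
  set σ := Equiv.swap a b
  let invs (f : Fin n → ℕ) := Finset.univ.filter (fun p : Fin n × Fin n => p.1 < p.2 ∧ f p.2 < f p.1)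
  have hab_mem : (a, b) ∈ invs x := by simp [invs, hab.lt, hdesc]
  suffices (invs (x ∘ σ)).card ≤ ((invs x).erase (a, b)).card from
    this.trans_lt (Finset.card_erase_lt_of_mem hab_mem)
  refine Finset.card_le_card_of_injOn (fun p => (σ p.1, σ p.2)) ?_ ?_
  · rintro ⟨c, d⟩ hcd
    simp only [invs, Finset.coe_filter, Finset.mem_univ, true_and, Set.mem_ofPred_eq,
      Function.comp_apply] at hcd
    have hne : (c, d) ≠ (a, b) := by
      rintro ⟨⟩
      simp only [σ, Equiv.swap_apply_left, Equiv.swap_apply_right] at hcd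
      exact hcd.2.not_gt hdesc
    refine Finset.mem_erase.mpr ⟨fun h => ?_, ?_⟩
    · simp only [Prod.mk.injEq, σ, Equiv.swap_apply_eq_iff, Equiv.swap_apply_left,
        Equiv.swap_apply_right] at h
      exact hab.lt.asymm (h.1 ▸ h.2 ▸ hcd.1)
    · simpa [invs, hcd.2] using Equiv.swap_lt_swap_of_covBy hab hcd.1 hne
  · rintro ⟨a, b⟩ - ⟨c, d⟩ - h
    simp only [Prod.mk.injEq] at h
    exact Prod.ext (σ.injective h.1) (σ.injective h.2)

lemma rookLen_comp_swap_lt {a b : Fin n} (hab : a ⋖ b) (hdesc : x b < x a) :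
    rookLen n (x ∘ Equiv.swap a b) < rookLen n x := by
  unfold rookLen
  rw [Function.comp_def, Equiv.sum_comp (Equiv.swap a b) x]
  exact Nat.add_lt_add_left (rookInv_comp_swap_lt hab hdesc) _

lemma bcrStep_comp_swap (hx : IsRook n x) {a b : Fin n} (hab : a < b) (hdesc : x b < x a) :
    BCRStep n (x ∘ Equiv.swap a b) x :=
  ⟨hx.comp_perm _, hx, Or.inr ⟨a, b, hab, by simp, by simp, hdesc,
    fun m hma hmb => by simp [Equiv.swap_apply_of_ne_of_ne hma hmb]⟩⟩

lemma comp_swap_le_succ (hupper : ∀ i : Fin n, x i ≤ i.val + 1) {a b : Fin n} (hab : a < b)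
    (hdesc : x b < x a) (i : Fin n) : (x ∘ Equiv.swap a b) i ≤ i.val + 1 := by
  have hab' : a.val < b.val := hab
  have := hupper a
  rw [Function.comp_apply, Equiv.swap_apply_def]
  split_ifs with hia hib
  · subst hia; omega
  · subst hib; omega
  · exact hupper i

lemma exists_bcrStep_of_not_monotone {k : ℕ} (hx : x ∈ upperRooks n k) (hmono : ¬Monotone x) :
    ∃ y ∈ upperRooks n k, BCRStep n y x ∧ rookLen n y < rookLen n x := by
  obtain ⟨hrook, hupper, hrank⟩ := hx
  obtain ⟨a, b, hab, hdesc⟩ : ∃ a b : Fin n, a ⋖ b ∧ x b < x a := by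
    simpa [monotone_iff_forall_covBy] using hmono
  exact ⟨x ∘ Equiv.swap a b, ⟨hrook.comp_perm _, comp_swap_le_succ hupper hab.lt hdesc,
    (rookRank_comp_perm _).trans hrank⟩, bcrStep_comp_swap hrook hab.lt hdesc,
    rookLen_comp_swap_lt hab hdesc⟩

end Swap

section Monotone

variable {n : ℕ} {x : Fin n → ℕ}

lemma rookInv_eq_zero_of_monotone (hmono : Monotone x) : rookInv n x = 0 := by
  simp only [rookInv, Finset.card_eq_zero, Finset.filter_eq_empty_iff]
  exact fun p _ h => (hmono h.1.le).not_gt h.2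

lemma sub_le_rookRank_of_monotone (hmono : Monotone x) {p : Fin n} (hp : x p ≠ 0) :
    n - p.val ≤ rookRank n x := by
  calc n - p.val = (Finset.Ici p).card := by simp
    _ ≤ rookRank n x := Finset.card_le_card fun m hm => by
      simp only [Finset.mem_filter, Finset.mem_univ, true_and]
      exact fun h => hp (Nat.eq_zero_of_le_zero (h ▸ hmono (Finset.mem_Ici.mp hm)))

lemma rookRank_le_of_monotone (hx : IsRook n x) (hmono : Monotone x) (p : Fin n) :
    rookRank n x ≤ x p + (n - 1 - p.val) := by
  have hleft : (Finset.univ.filter fun m => m ≤ p ∧ x m ≠ 0).card ≤ x p := by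
    calc _ ≤ (Finset.Icc 1 (x p)).card := by
          refine Finset.card_le_card_of_injOn x (fun m hm => ?_) (fun a ha b hb hab => ?_)
          · simp only [Finset.coe_filter, Finset.mem_univ, true_and, Set.mem_ofPred_eq] at hm
            exact Finset.mem_Icc.mpr ⟨Nat.one_le_iff_ne_zero.mpr hm.2, hmono hm.1⟩
          · simp only [Finset.coe_filter, Finset.mem_univ, true_and, Set.mem_ofPred_eq] at ha
            exact hx.2 a b ha.2 hab
      _ = x p := by simp
  have hright : (Finset.univ.filter fun m => p < m ∧ x m ≠ 0).card ≤ n - 1 - p.val :=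
    calc _ ≤ (Finset.Ioi p).card := Finset.card_le_card fun m hm => by simp_all
      _ = n - 1 - p.val := Fin.card_Ioi p
  calc rookRank n x
      ≤ (Finset.univ.filter fun m => m ≤ p ∧ x m ≠ 0).card
        + (Finset.univ.filter fun m => p < m ∧ x m ≠ 0).card := by
        rw [rookRank, ← Finset.card_union_of_disjoint]
        · refine Finset.card_le_card fun m => ?_
          simp only [Finset.mem_filter, Finset.mem_union, Finset.mem_univ, true_and]
          exact fun hm => (le_or_gt m p).imp (⟨·, hm⟩) (⟨·, hm⟩)
        · exact Finset.disjoint_filter.mpr fun m _ h1 h2 => h2.1.not_ge h1.1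
    _ ≤ x p + (n - 1 - p.val) := Nat.add_le_add hleft hright

lemma minRook_le_of_monotone {k : ℕ} (hx : IsRook n x) (hmono : Monotone x)
    (hrank : rookRank n x = k) (p : Fin n) : minRook n k p ≤ x p := by
  have := rookRank_le_of_monotone hx hmono p
  unfold minRook; split_ifs <;> omega

end Monotone

section Lower

variable {n : ℕ} {x : Fin n → ℕ} {p : Fin n} {v : ℕ}

lemma monotone_update (hmono : Monotone x) (hvp : v ≤ x p) (hbefore : ∀ q < p, x q ≤ v) :
    Monotone (Function.update x p v) := by
  intro a b hab
  simp only [Function.update_apply]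
  split_ifs with ha hb hb
  · exact le_rfl
  · exact hvp.trans (hmono (ha ▸ hab))
  · exact hbefore a (lt_of_le_of_ne (hb ▸ hab) ha)
  · exact hmono hab

lemma isRook_update (hx : IsRook n x) (hmono : Monotone x) (hvp : v < x p)
    (hbefore : ∀ q < p, x q < v) : IsRook n (Function.update x p v) := by
  have hfresh : ∀ q ≠ p, x q ≠ v := fun q hqp => by
    rcases hqp.lt_or_gt with hq | hq
    · exact (hbefore q hq).ne
    · exact (hvp.trans_le (hmono hq.le)).ne'
  refine ⟨fun q => ?_, fun a b ha hab => ?_⟩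
  · rcases eq_or_ne q p with rfl | hqp
    · simpa using hvp.le.trans (hx.1 q)
    · simpa [hqp] using hx.1 q
  simp only [Function.update_apply] at ha hab
  split_ifs at ha hab with hap hbp hbp
  · exact hap.trans hbp.symm
  · exact absurd hab.symm (hfresh b hbp)
  · exact absurd hab (hfresh a hap)
  · exact hx.2 a b ha hab

lemma rookRank_update (hv : v ≠ 0) (hxp : x p ≠ 0) :
    rookRank n (Function.update x p v) = rookRank n x := by
  unfold rookRank
  congr 1
  refine Finset.filter_congr fun q _ => ?_
  rcases eq_or_ne q p with rfl | hqp
  · simp [hv, hxp]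
  · simp [hqp]

lemma bcrStep_update (hx : IsRook n x) (hy : IsRook n (Function.update x p v)) (hvp : v < x p) :
    BCRStep n (Function.update x p v) x :=
  ⟨hy, hx, Or.inl ⟨p, by simpa using hvp, fun q hqp => by simp [hqp]⟩⟩

lemma rookLen_update_lt (hmono : Monotone x) (hmono' : Monotone (Function.update x p v))
    (hvp : v < x p) : rookLen n (Function.update x p v) < rookLen n x := by
  unfold rookLen
  rw [rookInv_eq_zero_of_monotone hmono, rookInv_eq_zero_of_monotone hmono']
  refine Nat.add_lt_add_right (Finset.sum_lt_sum (fun q _ => ?_) ⟨p, by simpa using hvp⟩) 0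
  rcases eq_or_ne q p with rfl | hqp
  · simpa using hvp.le
  · simp [hqp]

end Lower

lemma exists_bcrStep_of_monotone {n k : ℕ} {x : Fin n → ℕ} (hx : x ∈ upperRooks n k)
    (hmono : Monotone x) (hne : x ≠ minRook n k) :
    ∃ y ∈ upperRooks n k, BCRStep n y x ∧ rookLen n y < rookLen n x := by
  obtain ⟨hrook, hupper, hrank⟩ := hx
  obtain ⟨p, hp, hpmin⟩ := wellFounded_lt.has_min {q | x q ≠ minRook n k q}
    (Function.ne_iff.mp hne)
  have hbelow : ∀ q < p, x q = minRook n k q := fun q hq => not_not.mp (hpmin q · hq)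
  have hlt : minRook n k p < x p := (minRook_le_of_monotone hrook hmono hrank p).lt_of_ne' hp
  have hxp : x p ≠ 0 := (Nat.zero_le _).trans_lt hlt |>.ne'
  have he0p : minRook n k p ≠ 0 := by
    have := sub_le_rookRank_of_monotone hmono hxp
    rw [minRook_ne_zero_iff]
    omega
  have hbefore : ∀ q < p, x q < minRook n k p := fun q hq =>
    hbelow q hq ▸ minRook_lt_minRook hq he0p
  have hy := isRook_update hrook hmono hlt hbefore
  refine ⟨Function.update x p (minRook n k p), ⟨hy, fun q => ?_, ?_⟩, bcrStep_update hrook hy hlt,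
    rookLen_update_lt hmono (monotone_update hmono hlt.le fun q hq => (hbefore q hq).le) hlt⟩
  · rcases eq_or_ne q p with rfl | hqp
    · simpa using minRook_le_succ q
    · simpa [hqp] using hupper q
  · rw [rookRank_update he0p hxp, hrank]

theorem bcrLe_minRook {n k : ℕ} {x : Fin n → ℕ} (hx : x ∈ upperRooks n k) :
    BCRle n (minRook n k) x := by
  induction hlen : rookLen n x using Nat.strong_induction_on generalizing x with
  | _ N ih =>
    by_cases he : x = minRook n k
    · exact he ▸ .refl
    obtain ⟨y, hy, hyx, hlt⟩ := if hmono : Monotone x then exists_bcrStep_of_monotone hx hmono he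
      else exists_bcrStep_of_not_monotone hx hmono
    exact (ih _ (hlen ▸ hlt) hy rfl).tail hyx

/-- the rook `e₀` with `e₀(i) = 0` for `1 ≤ i ≤ n−k` and
`e₀(n−k+j) = j` for `1 ≤ j ≤ k` belongs to `P_{n,k}` (the upper triangular
`n`-rooks of rank `k`) and is below every element of `P_{n,k}` in the
Bruhat–Chevalley–Renner order; it is the unique minimum of `P_{n,k}`. -/
theorem stmt6 (n k : ℕ) (hk : k ≤ n) :
    let e0 : Fin n → ℕ := fun i => if i.val + 1 ≤ n - k then 0 else i.val + 1 - (n - k)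
    (IsRook n e0 ∧ (∀ i : Fin n, e0 i ≤ i.val + 1) ∧ rookRank n e0 = k) ∧
    ∀ x : Fin n → ℕ, IsRook n x → (∀ i : Fin n, x i ≤ i.val + 1) →
      rookRank n x = k → BCRle n e0 x :=
  ⟨minRook_mem_upperRooks hk, fun _ hx hupper hrank => bcrLe_minRook ⟨hx, hupper, hrank⟩⟩
end

section
/- Fix 0 ≤ k ≤ n. The maximal elements of the poset P_{n,k} are exactly the diagonal idempotent n-rooks of rank k; in particular there are exactly C(n,k) maximal elements, and every element of P_{n,k} lies below some diagonal idempotent n-rook of rank k. -/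
open scoped Classical

/-- A diagonal idempotent `n`-rook: an `n`-rook `e` with `e(i) ∈ {0, i}` for all `i`
(in 0-based positions, `e i ∈ {0, i+1}`). -/
def IsDiagIdem (n : ℕ) (e : Fin n → ℕ) : Prop :=
  IsRook n e ∧ ∀ i : Fin n, e i = 0 ∨ e i = i.val + 1

/-!
An upper triangular rook is a diagonal idempotent iff it has no *defect*, a position `i`
with `0 < x i ≤ i` (0-based). At the largest defect `i` the value `i + 1` is unused: only a
position `j ≥ i` could carry it, and such a `j` would be a larger defect. So raising `x i` to
`i + 1` is a generating relation of type (1) that stays in `P_{n,k}` and removes a defect;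
iterating reaches a diagonal idempotent above `x`, and a non-diagonal `x` is not maximal.

Conversely, both generating relations can only increase the counts `#{m ≤ p : t ≤ a m}`.
If `e ≤ y` with `e` diagonal idempotent, `e p = p + 1` and `y` upper triangular, this forces
`y p = p + 1`; so the support of `e` lies in that of `y`, and equal ranks give `y = e`.
Diagonal idempotents are determined by their supports, whence the count `C(n,k)`.
-/

namespace Rook

open Finset Function

variable {n : ℕ}

def support (a : Fin n → ℕ) : Finset (Fin n) :=
  univ.filter fun i => a i ≠ 0

lemma rookRank_eq_card_support (a : Fin n → ℕ) : rookRank n a = #(support a) := rfl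

@[simp]
lemma mem_support {a : Fin n → ℕ} {i : Fin n} : i ∈ support a ↔ a i ≠ 0 := by
  simp [support]

def defects (x : Fin n → ℕ) : Finset (Fin n) :=
  univ.filter fun i => 0 < x i ∧ x i ≤ i.val

@[simp]
lemma mem_defects {x : Fin n → ℕ} {i : Fin n} : i ∈ defects x ↔ 0 < x i ∧ x i ≤ i.val := by
  simp [defects]

lemma isDiagIdem_iff_defects_eq_empty {x : Fin n → ℕ} (hx : IsRook n x)
    (hut : ∀ i : Fin n, x i ≤ i.val + 1) : IsDiagIdem n x ↔ defects x = ∅ := by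
  simp only [IsDiagIdem, hx, true_and, eq_empty_iff_forall_notMem, mem_defects]
  refine forall_congr' fun i => ?_
  have := hut i
  omega

lemma isRook_update {x : Fin n → ℕ} (hx : IsRook n x) (i : Fin n) {v : ℕ} (hv : v ≤ n)
    (hfree : ∀ j, j ≠ i → x j ≠ v) : IsRook n (update x i v) := by
  refine ⟨fun j => ?_, fun a b ha hab => ?_⟩
  · rcases eq_or_ne j i with rfl | hj
    · simpa using hv
    · simpa [hj] using hx.1 j
  · rcases eq_or_ne a i with hai | hai <;> rcases eq_or_ne b i with hbi | hbi
    · exact hai.trans hbi.symm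
    · simp only [hai, update_self, update_of_ne hbi] at hab
      exact absurd hab.symm (hfree b hbi)
    · simp only [hbi, update_self, update_of_ne hai] at hab
      exact absurd hab (hfree a hai)
    · simp only [update_of_ne hai, update_of_ne hbi] at ha hab
      exact hx.2 a b ha hab

lemma support_update_of_ne_zero {x : Fin n → ℕ} {i : Fin n} {v : ℕ} (hxi : x i ≠ 0)
    (hv : v ≠ 0) : support (update x i v) = support x := by
  ext j
  rcases eq_or_ne j i with rfl | hj <;> simp [*]

lemma bcrStep_update_of_lt {x : Fin n → ℕ} {i : Fin n} {v : ℕ} (hx : IsRook n x)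
    (hy : IsRook n (update x i v)) (hlt : x i < v) : BCRStep n x (update x i v) :=
  ⟨hx, hy, Or.inl ⟨i, by simpa using hlt, fun _ hj => (update_of_ne hj _ _).symm⟩⟩

lemma apply_ne_succ_of_forall_defects_le {x : Fin n → ℕ} (hut : ∀ i : Fin n, x i ≤ i.val + 1)
    {i : Fin n} (hi : x i ≤ i.val) (hmax : ∀ j ∈ defects x, j ≤ i) (j : Fin n) :
    x j ≠ i.val + 1 := by
  intro hj
  have hij : i ≤ j := Fin.le_def.2 (by have := hut j; omega)
  rcases hij.eq_or_lt with rfl | hlt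
  · omega
  · exact (hmax j (mem_defects.2 ⟨by omega, by rw [hj]; exact hlt⟩)).not_gt hlt

lemma exists_bcrStep_card_defects_lt {x : Fin n → ℕ} (hx : IsRook n x)
    (hut : ∀ i : Fin n, x i ≤ i.val + 1) (hne : (defects x).Nonempty) :
    ∃ y, IsRook n y ∧ (∀ i : Fin n, y i ≤ i.val + 1) ∧ rookRank n y = rookRank n x ∧
      BCRStep n x y ∧ #(defects y) < #(defects x) := by
  set i := (defects x).max' hne
  have hi : i ∈ defects x := (defects x).max'_mem hne
  obtain ⟨hpos, hle⟩ := mem_defects.1 hi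
  have hfree := apply_ne_succ_of_forall_defects_le hut hle fun j hj => (defects x).le_max' j hj
  have hy : IsRook n (update x i (i.val + 1)) := isRook_update hx i i.isLt fun j _ => hfree j
  refine ⟨_, hy, fun j => ?_, ?_, bcrStep_update_of_lt hx hy (by omega), ?_⟩
  · rcases eq_or_ne j i with rfl | hj
    · simp
    · simpa [hj] using hut j
  · simp only [rookRank_eq_card_support, support_update_of_ne_zero hpos.ne' i.val.succ_ne_zero]
  · refine card_lt_card <| (ssubset_iff_of_subset fun j hj => ?_).2 ⟨i, hi, by simp⟩
    rcases eq_or_ne j i with rfl | hj'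
    · simp at hj
    · simpa [hj'] using hj

theorem exists_isDiagIdem_bcrle {x : Fin n → ℕ} (hx : IsRook n x)
    (hut : ∀ i : Fin n, x i ≤ i.val + 1) :
    ∃ e, IsDiagIdem n e ∧ rookRank n e = rookRank n x ∧ BCRle n x e := by
  induction hd : #(defects x) using Nat.strong_induction_on generalizing x with
  | _ d ih =>
    rcases (defects x).eq_empty_or_nonempty with he | hne
    · exact ⟨x, (isDiagIdem_iff_defects_eq_empty hx hut).2 he, rfl, .refl⟩
    · obtain ⟨y, hy, hyut, hrank, hstep, hlt⟩ := exists_bcrStep_card_defects_lt hx hut hne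
      obtain ⟨e, he, herank, hye⟩ := ih _ (hd ▸ hlt) hy hyut rfl
      exact ⟨e, he, herank.trans hrank, .head hstep hye⟩

theorem exists_bcrStep_ne_of_not_isDiagIdem {x : Fin n → ℕ} (hx : IsRook n x)
    (hut : ∀ i : Fin n, x i ≤ i.val + 1) (hnd : ¬ IsDiagIdem n x) :
    ∃ y, IsRook n y ∧ (∀ i : Fin n, y i ≤ i.val + 1) ∧ rookRank n y = rookRank n x ∧
      BCRStep n x y ∧ y ≠ x := by
  rw [isDiagIdem_iff_defects_eq_empty hx hut, ← ne_eq, ← nonempty_iff_ne_empty] at hnd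
  obtain ⟨y, hy, hyut, hrank, hstep, hlt⟩ := exists_bcrStep_card_defects_lt hx hut hnd
  exact ⟨y, hy, hyut, hrank, hstep, by rintro rfl; exact hlt.false⟩

def cornerCount (p : Fin n) (t : ℕ) (a : Fin n → ℕ) : ℕ :=
  #(univ.filter fun m => m ≤ p ∧ t ≤ a m)

lemma cornerCount_le_of_bcrStep {a b : Fin n → ℕ} (h : BCRStep n a b) (p : Fin n) (t : ℕ) :
    cornerCount p t a ≤ cornerCount p t b := by
  obtain ⟨-, -, ⟨i, hlt, heq⟩ | ⟨i, j, hij, hbi, hbj, hlt, heq⟩⟩ := h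
  · refine card_le_card fun m hm => ?_
    simp only [mem_filter, mem_univ, true_and] at hm ⊢
    refine ⟨hm.1, ?_⟩
    rcases eq_or_ne m i with rfl | hm'
    · exact hm.2.trans hlt.le
    · exact heq m hm' ▸ hm.2
  · by_cases hjp : j ≤ p
    -- the swap of `i` and `j` maps the counted positions of `a` to those of `b`
    · refine card_le_card_of_injOn (Equiv.swap i j) (fun m hm => ?_) (Equiv.injective _).injOn
      simp only [coe_filter, mem_univ, true_and, Set.mem_ofPred_eq] at hm ⊢
      rcases eq_or_ne m i with rfl | hmi
      · rw [Equiv.swap_apply_left, hbj]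
        exact ⟨hjp, hm.2⟩
      rcases eq_or_ne m j with rfl | hmj
      · rw [Equiv.swap_apply_right, hbi]
        exact ⟨hij.le.trans hjp, hm.2⟩
      rw [Equiv.swap_apply_of_ne_of_ne hmi hmj]
      exact ⟨hm.1, heq m hmi hmj ▸ hm.2⟩
    · refine card_le_card fun m hm => ?_
      simp only [mem_filter, mem_univ, true_and] at hm ⊢
      refine ⟨hm.1, ?_⟩
      have hmj : m ≠ j := by rintro rfl; exact hjp hm.1
      rcases eq_or_ne m i with rfl | hmi
      · omega
      · exact heq m hmi hmj ▸ hm.2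

lemma cornerCount_le_of_bcrle {a b : Fin n → ℕ} (h : BCRle n a b) (p : Fin n) (t : ℕ) :
    cornerCount p t a ≤ cornerCount p t b := by
  induction h with
  | refl => rfl
  | tail _ step ih => exact ih.trans (cornerCount_le_of_bcrStep step p t)

lemma apply_eq_succ_of_isDiagIdem_bcrle {e y : Fin n → ℕ} (he : IsDiagIdem n e)
    (hut : ∀ i : Fin n, y i ≤ i.val + 1) (hle : BCRle n e y) {p : Fin n} (hp : e p ≠ 0) :
    y p = p.val + 1 := by
  have hep : e p = p.val + 1 := (he.2 p).resolve_left hp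
  have hpos : 0 < cornerCount p (p.val + 1) y :=
    (card_pos.2 ⟨p, by simp [hep]⟩).trans_le (cornerCount_le_of_bcrle hle p _)
  obtain ⟨m, hm⟩ := card_pos.1 hpos
  simp only [mem_filter, mem_univ, true_and] at hm
  have hmp : m = p := le_antisymm hm.1 (Fin.le_def.2 (by have := hut m; omega))
  subst hmp
  have := hut m
  omega

theorem eq_of_isDiagIdem_bcrle {e y : Fin n → ℕ} (he : IsDiagIdem n e)
    (hut : ∀ i : Fin n, y i ≤ i.val + 1) (hr : rookRank n y = rookRank n e)
    (hle : BCRle n e y) : y = e := by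
  have hfix : ∀ i, e i ≠ 0 → y i = i.val + 1 := fun i hi =>
    apply_eq_succ_of_isDiagIdem_bcrle he hut hle hi
  have hsupp : support e = support y :=
    eq_of_subset_of_card_le (fun i hi => by simp [hfix i (mem_support.1 hi)]) hr.le
  funext i
  by_cases hi : e i = 0
  · have : i ∉ support y := hsupp ▸ by simpa using hi
    simpa [hi] using this
  · rw [hfix i hi, (he.2 i).resolve_left hi]

def diagOfFinset (S : Finset (Fin n)) : Fin n → ℕ :=
  fun i => if i ∈ S then i.val + 1 else 0

lemma isDiagIdem_diagOfFinset (S : Finset (Fin n)) : IsDiagIdem n (diagOfFinset S) := by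
  refine ⟨⟨fun i => ?_, fun i j hi hij => ?_⟩, fun i => ?_⟩ <;>
    simp only [diagOfFinset] at * <;> split_ifs at * <;> omega

lemma support_diagOfFinset (S : Finset (Fin n)) : support (diagOfFinset S) = S := by
  ext i
  by_cases hi : i ∈ S <;> simp [diagOfFinset, hi]

lemma diagOfFinset_support {e : Fin n → ℕ} (he : IsDiagIdem n e) :
    diagOfFinset (support e) = e := by
  funext i
  rcases he.2 i with hi | hi <;> simp [diagOfFinset, hi]

def diagIdemEquivFinset : {e : Fin n → ℕ // IsDiagIdem n e} ≃ Finset (Fin n) where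
  toFun e := support e.1
  invFun S := ⟨diagOfFinset S, isDiagIdem_diagOfFinset S⟩
  left_inv e := Subtype.ext (diagOfFinset_support e.2)
  right_inv := support_diagOfFinset

theorem card_isDiagIdem_rookRank_eq (n k : ℕ) :
    Nat.card {e : Fin n → ℕ // IsDiagIdem n e ∧ rookRank n e = k} = n.choose k := by
  let equiv : {e : Fin n → ℕ // IsDiagIdem n e ∧ rookRank n e = k} ≃
      {S : Finset (Fin n) // #S = k} :=
    (Equiv.subtypeSubtypeEquivSubtypeInter _ _).symm.trans
      (diagIdemEquivFinset.subtypeEquiv fun _ => Iff.rfl)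
  rw [Nat.card_congr equiv, Nat.card_eq_fintype_card, Fintype.card_finset_len, Fintype.card_fin]

end Rook

open Rook in
theorem stmt7_general (n k : ℕ) :
    (∀ x : Fin n → ℕ, IsRook n x → (∀ i : Fin n, x i ≤ i.val + 1) → rookRank n x = k →
      ((∀ y : Fin n → ℕ, IsRook n y → (∀ i : Fin n, y i ≤ i.val + 1) →
          rookRank n y = k → BCRle n x y → y = x)
        ↔ IsDiagIdem n x)) ∧
    Nat.card {e : Fin n → ℕ // IsDiagIdem n e ∧ rookRank n e = k} = n.choose k ∧
    (∀ x : Fin n → ℕ, IsRook n x → (∀ i : Fin n, x i ≤ i.val + 1) → rookRank n x = k →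
      ∃ e : Fin n → ℕ, IsDiagIdem n e ∧ rookRank n e = k ∧ BCRle n x e) := by
  refine ⟨fun x hx hut hrk => ⟨fun hmax => ?_, fun hd y _ hyut hyr hle => ?_⟩,
    card_isDiagIdem_rookRank_eq n k, fun x hx hut hrk => ?_⟩
  · by_contra hnd
    obtain ⟨y, hy, hyut, hyr, hstep, hyx⟩ := exists_bcrStep_ne_of_not_isDiagIdem hx hut hnd
    exact hyx (hmax y hy hyut (hyr.trans hrk) (.single hstep))
  · exact eq_of_isDiagIdem_bcrle hd hyut (hyr.trans hrk.symm) hle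
  · exact hrk ▸ exists_isDiagIdem_bcrle hx hut

/-- the maximal elements of `P_{n,k}` (upper triangular `n`-rooks of
rank `k` under the Bruhat–Chevalley–Renner order) are exactly the diagonal
idempotent `n`-rooks of rank `k`; there are exactly `C(n,k)` of them, and every
element of `P_{n,k}` lies below some diagonal idempotent of rank `k`. -/
theorem stmt7 (n k : ℕ) (hk : k ≤ n) :
    (∀ x : Fin n → ℕ, IsRook n x → (∀ i : Fin n, x i ≤ i.val + 1) → rookRank n x = k →
      ((∀ y : Fin n → ℕ, IsRook n y → (∀ i : Fin n, y i ≤ i.val + 1) →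
          rookRank n y = k → BCRle n x y → y = x)
        ↔ IsDiagIdem n x)) ∧
    Nat.card {e : Fin n → ℕ // IsDiagIdem n e ∧ rookRank n e = k} = n.choose k ∧
    (∀ x : Fin n → ℕ, IsRook n x → (∀ i : Fin n, x i ≤ i.val + 1) → rookRank n x = k →
      ∃ e : Fin n → ℕ, IsDiagIdem n e ∧ rookRank n e = k ∧ BCRle n x e) :=
  stmt7_general n k
end

section
/- For every diagonal idempotent n-rook e of rank k, the length of e is ℓ(e) = k(2n − k + 1)/2. -/
open scoped Classical

/-! A diagonal idempotent `e` is determined by its support `S`, with `e(i) = i` on `S`. Its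
inversions are exactly the pairs `i < j` with `i ∈ S` and `j ∉ S`, so each `i ∈ S` contributes
`i + #{j > i : j ∉ S} = n - #{j > i : j ∈ S}` to `ℓ(e)`. Summing over `S` gives
`ℓ(e) = k n - C(k, 2)`. -/

open Finset

theorem Finset.sum_card_filter_lt_eq_choose_two {α : Type*} [LinearOrder α] (s : Finset α) :
    ∑ i ∈ s, #(s.filter (i < ·)) = (#s).choose 2 := by
  induction s using Finset.induction_on_max with
  | empty => simp
  | insert m s hlt ih =>
    have hm : m ∉ s := fun h => lt_irrefl m (hlt m h)
    have hfilter : ∀ i ∈ s, (insert m s).filter (i < ·) = insert m (s.filter (i < ·)) :=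
      fun i hi => by rw [filter_insert, if_pos (hlt i hi)]
    have hmax : (insert m s).filter (m < ·) = ∅ :=
      filter_eq_empty_iff.2 fun x hx => not_lt.2 (by grind)
    rw [sum_insert hm, card_insert_of_notMem hm, Nat.choose_succ_left _ _ zero_lt_two,
      sum_congr rfl fun i hi => by rw [hfilter i hi, card_insert_of_notMem (by simp [hm])],
      sum_add_distrib, ih]
    simp [hmax, add_comm]

def diagIdemRook {n : ℕ} (s : Finset (Fin n)) : Fin n → ℕ :=
  fun i => if i ∈ s then i + 1 else 0

theorem eq_diagIdemRook_support {n : ℕ} {e : Fin n → ℕ}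
    (he : ∀ i : Fin n, e i = 0 ∨ e i = i.val + 1) :
    e = diagIdemRook (univ.filter (e · ≠ 0)) := by
  funext i
  rcases he i with h | h <;> simp [diagIdemRook, h]

section diagIdemRook

variable {n : ℕ} (s : Finset (Fin n))

theorem rookInv_diagIdemRook :
    rookInv n (diagIdemRook s) = ∑ i ∈ s, #((Ioi i).filter (· ∉ s)) := by
  rw [rookInv, card_filter, Fintype.sum_prod_type]
  rw [← sum_subset (subset_univ s) fun i _ hi => ?vacant]
  · refine sum_congr rfl fun i hi => ?_
    rw [← card_filter]
    congr 1
    ext j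
    by_cases hj : j ∈ s
    · simpa [diagIdemRook, hi, hj] using le_of_lt
    · simp [diagIdemRook, hi, hj]
  · simp [diagIdemRook, hi]

theorem rookLen_diagIdemRook_add_choose_two :
    rookLen n (diagIdemRook s) + (#s).choose 2 = #s * n := by
  have hsplit : ∀ i : Fin n, #((Ioi i).filter (· ∉ s)) + #(s.filter (i < ·)) = n - 1 - i := by
    intro i
    rw [← Fin.card_Ioi, ← card_filter_add_card_filter_not (s := Ioi i) (· ∉ s), add_right_inj]
    congr 1
    ext j
    simp [and_comm]
  rw [rookLen, rookInv_diagIdemRook, ← s.sum_card_filter_lt_eq_choose_two]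
  simp only [diagIdemRook]
  rw [sum_ite_mem, univ_inter, add_assoc, ← sum_add_distrib, ← sum_add_distrib, card_eq_sum_ones,
    sum_mul]
  refine sum_congr rfl fun i _ => ?_
  rw [add_assoc, hsplit]
  omega

end diagIdemRook

theorem eq_mul_two_mul_sub_add_one_div_two_of_add_choose_two {L k n : ℕ} (hkn : k ≤ n)
    (h : L + k.choose 2 = k * n) : L = k * (2 * n - k + 1) / 2 := by
  have hchoose : 2 * k.choose 2 + k = k * k := by
    rw [Nat.choose_two_right, Nat.mul_div_cancel' (Nat.even_mul_pred_self k).two_dvd]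
    cases k <;> simp [Nat.mul_succ]
  obtain ⟨m, rfl⟩ := Nat.exists_eq_add_of_le hkn
  rw [show 2 * (k + m) - k + 1 = k + 2 * m + 1 by omega]
  refine (Nat.div_eq_of_eq_mul_left two_pos ?_).symm
  linarith

/-- every diagonal idempotent `n`-rook `e` of rank `k` has length
`ℓ(e) = k(2n − k + 1)/2` (the division is exact). -/
theorem stmt9 (n k : ℕ) (e : Fin n → ℕ) (he : IsDiagIdem n e)
    (hrank : rookRank n e = k) :
    rookLen n e = k * (2 * n - k + 1) / 2 := by
  have hlen := rookLen_diagIdemRook_add_choose_two (univ.filter (e · ≠ 0))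
  rw [← eq_diagIdemRook_support he.2, show #(univ.filter (e · ≠ 0)) = k from hrank] at hlen
  have hkn : k ≤ n := hrank ▸ (card_le_univ _).trans_eq (Fintype.card_fin n)
  exact eq_mul_two_mul_sub_add_one_div_two_of_add_choose_two hkn hlen
end

section
/- For 0 ≤ k ≤ n, the number of upper triangular n-rooks of rank k equals the Stirling number of the second kind S(n+1, n+1−k). -/
open scoped Classical

/-!
Send each element of `{0, …, n}` to the next smaller element of its block, or to itself if it is
the least one. The maps `f` arising this way are exactly those with `f x ≤ x` that are injective
off their fixed points: the blocks are recovered as the classes of "the forward orbits of `x` and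
`y` meet", and each block contains exactly one fixed point. An upper triangular `n`-rook encodes
such a map by `a i = f (i + 1) + 1` at the non-fixed points, so its rank is `n + 1` minus the
number of blocks.
-/

open Finset

variable {α : Type*}

def tailSetoid (f : α → α) : Setoid α where
  r x y := ∃ m m', f^[m] x = f^[m'] y
  iseqv :=
    { refl := fun _ => ⟨0, 0, rfl⟩
      symm := fun ⟨m, m', h⟩ => ⟨m', m, h.symm⟩
      trans := fun ⟨m, m', h⟩ ⟨p, p', h'⟩ => ⟨p + m, m' + p', by
        rw [Function.iterate_add_apply, h, ← Function.iterate_add_apply, add_comm,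
          Function.iterate_add_apply, h', ← Function.iterate_add_apply]⟩ }

lemma tailSetoid_apply_rel (f : α → α) (x : α) : tailSetoid f (f x) x := ⟨0, 1, rfl⟩

namespace Finpartition

lemma parts_eq_image_part_s10 [DecidableEq α] {s : Finset α} (P : Finpartition s) :
    P.parts = s.image P.part := by
  ext t
  refine ⟨fun ht => ?_, fun ht => ?_⟩
  · obtain ⟨a, ha, rfl⟩ := P.part_surjOn ht
    exact mem_image_of_mem _ ha
  · obtain ⟨a, ha, rfl⟩ := mem_image.1 ht
    exact P.part_mem.2 ha

lemma eq_of_part_eq [DecidableEq α] {s : Finset α} {P Q : Finpartition s}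
    (h : ∀ a ∈ s, P.part a = Q.part a) : P = Q := by
  ext1
  rw [parts_eq_image_part_s10, parts_eq_image_part_s10]
  exact image_congr h

end Finpartition

section PartialOrder

variable [PartialOrder α] {f : α → α}

lemma exists_iterate_isFixedPt_of_le_id [WellFoundedLT α] (hf : f ≤ id) (x : α) :
    ∃ m, Function.IsFixedPt f (f^[m] x) := by
  induction x using WellFoundedLT.induction with
  | _ x ih =>
  rcases (hf x).lt_or_eq with hx | hx
  · obtain ⟨m, hm⟩ := ih (f x) hx
    exact ⟨m + 1, hm⟩
  · exact ⟨0, hx⟩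

lemma lt_of_tailSetoid_of_lt (hf : f ≤ id) {y e : α} (hye : tailSetoid f y e) (hy : y < e) :
    f e < e := by
  refine (hf e).lt_of_ne fun he => ?_
  obtain ⟨m, m', h⟩ := hye
  rw [Function.iterate_fixed he] at h
  exact (Function.iterate_le_id_of_le_id hf m y).not_gt (h ▸ hy)

end PartialOrder

section LinearOrder

variable [LinearOrder α]

structure IsPredecessorMap (f : α → α) : Prop where
  le : ∀ x, f x ≤ x
  injOn : Set.InjOn f {x | f x ≠ x}

namespace IsPredecessorMap

variable {f : α → α}

lemma le_of_tailSetoid_of_lt [WellFoundedLT α] (hf : IsPredecessorMap f) {y e : α}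
    (hye : tailSetoid f y e) (hy : y < e) : y ≤ f e := by
  induction e using WellFoundedLT.induction generalizing y with
  | _ e ih =>
  by_contra! hfe
  -- By injectivity `f e < y` forces `f e < f y`, so descending from `y` never leaves the
  -- interval `(f e, e)`: impossible in a well-founded order.
  induction y using WellFoundedLT.induction with
  | _ y ihy =>
  have hfey : tailSetoid f (f e) y :=
    (tailSetoid f).trans (tailSetoid_apply_rel f e) ((tailSetoid f).symm hye)
  have hfy : f y < y := lt_of_tailSetoid_of_lt hf.le hfey hfe
  have hfe_lt : f e < f y := by
    refine (ih y hy hfey hfe).lt_of_ne fun heq => hy.ne ?_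
    exact (hf.injOn (lt_of_tailSetoid_of_lt hf.le hye hy).ne hfy.ne heq).symm
  exact ihy (f y) hfy ((tailSetoid f).trans (tailSetoid_apply_rel f y) hye) (hfy.trans hy) hfe_lt

end IsPredecessorMap

variable [Fintype α]

namespace Finpartition

structure IsBlockPredecessor (P : Finpartition (univ : Finset α)) (f : α → α) : Prop where
  part_apply : ∀ e, P.part (f e) = P.part e
  le : ∀ e, f e ≤ e
  lt : ∀ {y e}, P.part y = P.part e → y < e → f e < e
  le_of_lt : ∀ {y e}, P.part y = P.part e → y < e → y ≤ f e

noncomputable def blockPredecessor (P : Finpartition (univ : Finset α)) (e : α) : α :=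
  if h : {y ∈ P.part e | y < e}.Nonempty then {y ∈ P.part e | y < e}.max' h else e

lemma part_eq_part_iff_mem {P : Finpartition (univ : Finset α)} {a b : α} :
    P.part a = P.part b ↔ a ∈ P.part b :=
  (P.mem_part_iff_part_eq_part (mem_univ a) (mem_univ b)).symm

lemma isBlockPredecessor_blockPredecessor (P : Finpartition (univ : Finset α)) :
    P.IsBlockPredecessor P.blockPredecessor where
  part_apply e := by
    unfold blockPredecessor
    split_ifs with h
    · exact part_eq_part_iff_mem.2 (mem_filter.1 (max'_mem _ h)).1
    · rfl
  le e := by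
    unfold blockPredecessor
    split_ifs with h
    · exact (mem_filter.1 (max'_mem _ h)).2.le
    · rfl
  lt {y e} hy hye := by
    have h : {y ∈ P.part e | y < e}.Nonempty :=
      ⟨y, mem_filter.2 ⟨part_eq_part_iff_mem.1 hy, hye⟩⟩
    rw [blockPredecessor, dif_pos h]
    exact (mem_filter.1 (max'_mem _ h)).2
  le_of_lt {y e} hy hye := by
    have hmem : y ∈ {y ∈ P.part e | y < e} := mem_filter.2 ⟨part_eq_part_iff_mem.1 hy, hye⟩
    rw [blockPredecessor, dif_pos ⟨y, hmem⟩]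
    exact le_max' _ _ hmem

namespace IsBlockPredecessor

variable {P : Finpartition (univ : Finset α)} {f g : α → α}

lemma isPredecessorMap (hf : P.IsBlockPredecessor f) : IsPredecessorMap f := by
  refine ⟨hf.le, fun x hx y hy hxy => ?_⟩
  have hpart : P.part x = P.part y := by rw [← hf.part_apply x, hxy, hf.part_apply y]
  have hx' : f x < x := (hf.le x).lt_of_ne hx
  have hy' : f y < y := (hf.le y).lt_of_ne hy
  rcases lt_trichotomy x y with h | h | h
  · exact absurd (hf.le_of_lt hpart h) (hxy ▸ hx').not_ge
  · exact h
  · exact absurd (hf.le_of_lt hpart.symm h) (hxy ▸ hy').not_ge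

lemma unique (hf : P.IsBlockPredecessor f) (hg : P.IsBlockPredecessor g) : f = g := by
  have key {f g : α → α} (hf : P.IsBlockPredecessor f) (hg : P.IsBlockPredecessor g) (e : α) :
      f e ≤ g e := by
    rcases (hf.le e).lt_or_eq with h | h
    · exact hg.le_of_lt (hf.part_apply e) h
    · rcases (hg.le e).lt_or_eq with h' | h'
      · exact absurd (hf.lt (hg.part_apply e) h') h.not_lt
      · rw [h, h']
  funext e
  exact le_antisymm (key hf hg e) (key hg hf e)

lemma part_iterate (hf : P.IsBlockPredecessor f) (m : ℕ) (x : α) :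
    P.part (f^[m] x) = P.part x := by
  induction m generalizing x with
  | zero => rfl
  | succ m ih => rw [Function.iterate_succ_apply, ih, hf.part_apply]

lemma eq_of_part_eq_of_fixed (hf : P.IsBlockPredecessor f) {u v : α} (hu : f u = u) (hv : f v = v)
    (huv : P.part u = P.part v) : u = v := by
  rcases lt_trichotomy u v with h | h | h
  · exact absurd (hf.lt huv h) hv.not_lt
  · exact h
  · exact absurd (hf.lt huv.symm h) hu.not_lt

lemma tailSetoid_iff (hf : P.IsBlockPredecessor f) {x y : α} :
    tailSetoid f x y ↔ P.part x = P.part y := by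
  constructor
  · rintro ⟨m, m', h⟩
    rw [← hf.part_iterate m x, h, hf.part_iterate]
  · intro hxy
    obtain ⟨m, hm⟩ := exists_iterate_isFixedPt_of_le_id hf.le x
    obtain ⟨m', hm'⟩ := exists_iterate_isFixedPt_of_le_id hf.le y
    refine ⟨m, m', hf.eq_of_part_eq_of_fixed hm hm' ?_⟩
    rw [hf.part_iterate, hf.part_iterate, hxy]

lemma ofSetoid_tailSetoid (hf : P.IsBlockPredecessor f) : ofSetoid (tailSetoid f) = P := by
  refine eq_of_part_eq fun a _ => ?_
  ext b
  rw [mem_part_ofSetoid_iff_rel, hf.tailSetoid_iff, eq_comm, part_eq_part_iff_mem]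

lemma card_parts (hf : P.IsBlockPredecessor f) : #P.parts = #{x | f x = x} := by
  symm
  refine card_nbij P.part (fun u _ => P.part_mem.2 (mem_univ u)) ?_ ?_
  · intro u hu v hv huv
    exact hf.eq_of_part_eq_of_fixed (mem_filter.1 hu).2 (mem_filter.1 hv).2 huv
  · intro p hp
    obtain ⟨x, -, rfl⟩ := P.part_surjOn hp
    obtain ⟨m, hm⟩ := exists_iterate_isFixedPt_of_le_id hf.le x
    exact ⟨f^[m] x, mem_filter.2 ⟨mem_univ _, hm⟩, hf.part_iterate m x⟩

end IsBlockPredecessor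

lemma part_ofSetoid_eq_iff (r : Setoid α) [DecidableRel r] {a b : α} :
    (ofSetoid r).part a = (ofSetoid r).part b ↔ r a b := by
  rw [part_eq_part_iff_mem, mem_part_ofSetoid_iff_rel]
  exact ⟨r.symm, r.symm⟩

end Finpartition

lemma IsPredecessorMap.isBlockPredecessor_ofSetoid [WellFoundedLT α] {f : α → α}
    (hf : IsPredecessorMap f) : (Finpartition.ofSetoid (tailSetoid f)).IsBlockPredecessor f where
  part_apply e := (Finpartition.part_ofSetoid_eq_iff _).2 (tailSetoid_apply_rel f e)
  le := hf.le
  lt h := lt_of_tailSetoid_of_lt hf.le ((Finpartition.part_ofSetoid_eq_iff _).1 h)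
  le_of_lt h := hf.le_of_tailSetoid_of_lt ((Finpartition.part_ofSetoid_eq_iff _).1 h)

noncomputable def predecessorMapEquiv :
    {f : α → α // IsPredecessorMap f} ≃ Finpartition (univ : Finset α) where
  toFun f := Finpartition.ofSetoid (tailSetoid f.1)
  invFun P := ⟨P.blockPredecessor, P.isBlockPredecessor_blockPredecessor.isPredecessorMap⟩
  left_inv f := Subtype.ext <|
    (Finpartition.isBlockPredecessor_blockPredecessor _).unique f.2.isBlockPredecessor_ofSetoid
  right_inv P := P.isBlockPredecessor_blockPredecessor.ofSetoid_tailSetoid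

lemma card_parts_predecessorMapEquiv (f : {f : α → α // IsPredecessorMap f}) :
    #(predecessorMapEquiv f).parts = #{x | f.1 x = x} :=
  f.2.isBlockPredecessor_ofSetoid.card_parts

end LinearOrder

section Rook

variable {n : ℕ}

def rookOfPredecessorMap (f : Fin (n + 1) → Fin (n + 1)) (i : Fin n) : ℕ :=
  if f i.succ = i.succ then 0 else f i.succ + 1

/-- `Fin.ofNat` reduces `a i - 1` modulo `n + 1`, which is harmless when `a i ≤ i + 1`. -/
def predecessorMapOfRook (a : Fin n → ℕ) : Fin (n + 1) → Fin (n + 1) :=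
  Fin.cases (motive := fun _ => Fin (n + 1)) 0 fun i =>
    if a i = 0 then i.succ else Fin.ofNat (n + 1) (a i - 1)

lemma val_predecessorMapOfRook_succ {a : Fin n → ℕ} {i : Fin n} (hi : a i ≤ i + 1) :
    (predecessorMapOfRook a i.succ : ℕ) = if a i = 0 then (i : ℕ) + 1 else a i - 1 := by
  rw [predecessorMapOfRook, Fin.cases_succ]
  split_ifs
  · rfl
  · rw [Fin.val_ofNat, Nat.mod_eq_of_lt (by omega)]

lemma isPredecessorMap_predecessorMapOfRook {a : Fin n → ℕ} (ha : IsRook n a)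
    (hle : ∀ i : Fin n, a i ≤ i + 1) : IsPredecessorMap (predecessorMapOfRook a) := by
  have hval := fun i => val_predecessorMapOfRook_succ (hle i)
  refine ⟨fun x => ?_, fun x hx y hy hxy => ?_⟩
  · cases x using Fin.cases with
    | zero => exact le_rfl
    | succ i =>
      have := hle i
      rw [Fin.le_iff_val_le_val, hval, Fin.val_succ]
      split_ifs <;> omega
  · cases x using Fin.cases with
    | zero => exact absurd rfl hx
    | succ i =>
    cases y using Fin.cases with
    | zero => exact absurd rfl hy
    | succ j =>
    have hi : a i ≠ 0 := fun h => hx (Fin.ext (by rw [hval, if_pos h, Fin.val_succ]))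
    have hj : a j ≠ 0 := fun h => hy (Fin.ext (by rw [hval, if_pos h, Fin.val_succ]))
    rw [Fin.ext_iff, hval, hval, if_neg hi, if_neg hj] at hxy
    exact congrArg Fin.succ (ha.2 i j hi (by omega))

lemma IsPredecessorMap.apply_zero {f : Fin (n + 1) → Fin (n + 1)} (hf : IsPredecessorMap f) :
    f 0 = 0 :=
  le_antisymm (hf.le 0) (Fin.zero_le _)

lemma IsPredecessorMap.rookOfPredecessorMap_le {f : Fin (n + 1) → Fin (n + 1)}
    (hf : IsPredecessorMap f) (i : Fin n) : rookOfPredecessorMap f i ≤ i + 1 := by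
  unfold rookOfPredecessorMap
  split_ifs with h
  · omega
  · have := Fin.lt_def.1 ((hf.le i.succ).lt_of_ne h)
    rw [Fin.val_succ] at this
    omega

lemma IsPredecessorMap.isRook_rookOfPredecessorMap {f : Fin (n + 1) → Fin (n + 1)}
    (hf : IsPredecessorMap f) : IsRook n (rookOfPredecessorMap f) := by
  refine ⟨fun i => (hf.rookOfPredecessorMap_le i).trans i.isLt, fun i j hi hij => ?_⟩
  have h₁ : f i.succ ≠ i.succ := fun h => hi (if_pos h)
  have h₂ : f j.succ ≠ j.succ := fun h => hi (hij.trans (if_pos h))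
  rw [rookOfPredecessorMap, rookOfPredecessorMap, if_neg h₁, if_neg h₂] at hij
  exact Fin.succ_injective _ (hf.injOn h₁ h₂ (Fin.ext (by omega)))

lemma IsPredecessorMap.rookRank_rookOfPredecessorMap {f : Fin (n + 1) → Fin (n + 1)}
    (hf : IsPredecessorMap f) : rookRank n (rookOfPredecessorMap f) = #{x | f x ≠ x} := by
  rw [Fin.card_filter_univ_succ, if_neg (not_not.2 hf.apply_zero), rookRank]
  congr 1
  ext i
  simp [rookOfPredecessorMap]

/-- `a i = j + 1` records that `f (i + 1) = j < i + 1`, and `a i = 0` that `i + 1` is fixed. -/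
def rookEquiv (n : ℕ) :
    {a : Fin n → ℕ // IsRook n a ∧ ∀ i : Fin n, a i ≤ i.val + 1} ≃
      {f : Fin (n + 1) → Fin (n + 1) // IsPredecessorMap f} where
  toFun a := ⟨predecessorMapOfRook a.1, isPredecessorMap_predecessorMapOfRook a.2.1 a.2.2⟩
  invFun f :=
    ⟨rookOfPredecessorMap f.1, f.2.isRook_rookOfPredecessorMap, f.2.rookOfPredecessorMap_le⟩
  left_inv a := by
    obtain ⟨a, -, hle⟩ := a
    ext i : 2
    have := hle i
    dsimp only
    simp only [rookOfPredecessorMap, Fin.ext_iff, val_predecessorMapOfRook_succ (hle i),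
      Fin.val_succ]
    split_ifs <;> omega
  right_inv f := by
    obtain ⟨f, hf⟩ := f
    ext x : 2
    cases x using Fin.cases with
    | zero => exact hf.apply_zero.symm
    | succ i =>
      refine Fin.ext ?_
      rw [val_predecessorMapOfRook_succ (hf.rookOfPredecessorMap_le i)]
      by_cases h : f i.succ = i.succ <;> simp [rookOfPredecessorMap, h]

lemma card_parts_rookEquiv
    (a : {a : Fin n → ℕ // IsRook n a ∧ ∀ i : Fin n, a i ≤ i.val + 1}) :
    #(predecessorMapEquiv (rookEquiv n a)).parts + rookRank n a = n + 1 := by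
  obtain ⟨f, rfl⟩ := (rookEquiv n).symm.surjective a
  rw [Equiv.apply_symm_apply, card_parts_predecessorMapEquiv]
  change _ + rookRank n (rookOfPredecessorMap f.1) = _
  rw [f.2.rookRank_rookOfPredecessorMap, card_filter_add_card_filter_not, card_univ,
    Fintype.card_fin]

end Rook

/-- for `0 ≤ k ≤ n`, the number of upper triangular `n`-rooks of
rank `k` equals the Stirling number of the second kind `S(n+1, n+1−k)`, i.e.
the number of set partitions of `{1,…,n+1}` into exactly `n+1−k` blocks. -/
theorem stmt10 (n k : ℕ) (hk : k ≤ n) :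
    Nat.card {a : Fin n → ℕ //
        IsRook n a ∧ (∀ i : Fin n, a i ≤ i.val + 1) ∧ rookRank n a = k}
      = Nat.card {P : Finpartition (Finset.univ : Finset (Fin (n + 1))) //
          P.parts.card = n + 1 - k} := by
  calc _ = Nat.card {a : {a : Fin n → ℕ // IsRook n a ∧ ∀ i : Fin n, a i ≤ i.val + 1} //
          rookRank n a = k} :=
        Nat.card_congr <| (Equiv.subtypeEquivRight fun _ => and_assoc.symm).trans
          (Equiv.subtypeSubtypeEquivSubtypeInter _ _).symm
    _ = _ := Nat.card_congr <| ((rookEquiv n).trans predecessorMapEquiv).subtypeEquiv fun a => by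
        have := card_parts_rookEquiv a
        simp only [Equiv.trans_apply]
        omega
end

section
/- The map ι is an order embedding: for all n-rooks σ and τ, σ ≤ τ in the Bruhat–Chevalley–Renner order on n-rooks if and only if ι(σ) ≤ ι(τ) in the Bruhat–Chevalley–Renner order on 2n-rooks. -/
open scoped Classical

/-- The map `ι` sending an `n`-rook `σ` to the `2n`-rook which is `0` on the
first `n` positions and `σ` on the last `n` positions. -/
def iota (n : ℕ) (σ : Fin n → ℕ) : Fin (2 * n) → ℕ :=
  fun i => if h : n ≤ (i : ℕ) then σ ⟨(i : ℕ) - n, by have := i.isLt; omega⟩ else 0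

/-!
The Bruhat–Chevalley–Renner order on rooks is detected by counting: `a ≤ b` iff for all `I`
and `t`, among its first `I` positions `b` has at least as many entries above `t` as `a`.
The generating relations only increase these counts. Conversely, if `b ≠ a` dominates `a`,
then at the first position `i` where they differ `a i < b i`; swapping `i` with the first
later position whose value lies in `(a i, b i]`, or raising `a i` to `b i` when there is
none, is a generating step after which `b` still dominates, and it increases the total
count, so iterating it reaches `b`.
Since `ι σ` is `σ` preceded by `n` empty positions, its counts are those of `σ` with `I`
replaced by `I - n`, so the counting criterion holds for `ι σ, ι τ` iff it holds for `σ, τ`.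
-/

open Finset

def rookCount (n : ℕ) (a : Fin n → ℕ) (I t : ℕ) : ℕ :=
  #{k : Fin n | (k : ℕ) < I ∧ t < a k}

def RookCountLE (n : ℕ) (a b : Fin n → ℕ) : Prop :=
  ∀ I t, rookCount n a I t ≤ rookCount n b I t

section RookCount

variable {n : ℕ}

lemma rookCount_eq_sum (a : Fin n → ℕ) (I t : ℕ) :
    rookCount n a I t = ∑ k : Fin n, if (k : ℕ) < I ∧ t < a k then 1 else 0 := by
  rw [rookCount, card_filter]

lemma rookCount_mono {a b : Fin n → ℕ} {I : ℕ} (h : ∀ k : Fin n, (k : ℕ) < I → a k ≤ b k)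
    (t : ℕ) : rookCount n a I t ≤ rookCount n b I t := by
  refine card_le_card fun k hk => ?_
  simp only [mem_filter, mem_univ, true_and] at hk ⊢
  exact ⟨hk.1, hk.2.trans_le (h k hk.1)⟩

lemma rookCount_comp_swap (a : Fin n → ℕ) {i j : Fin n} {I : ℕ} (hi : (i : ℕ) < I)
    (hj : (j : ℕ) < I) (t : ℕ) : rookCount n (a ∘ Equiv.swap i j) I t = rookCount n a I t := by
  rw [rookCount_eq_sum, rookCount_eq_sum,
    ← Equiv.sum_comp (Equiv.swap i j) (fun k => if (k : ℕ) < I ∧ t < a k then 1 else 0)]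
  refine sum_congr rfl fun k _ => ?_
  rcases eq_or_ne k i with rfl | hki
  · simp [hi, hj]
  rcases eq_or_ne k j with rfl | hkj
  · simp [hi, hj]
  · simp [Equiv.swap_apply_of_ne_of_ne hki hkj]

lemma rookCount_add_ite {a a' : Fin n → ℕ} {I : ℕ} {i : Fin n}
    (h : ∀ k, k ≠ i → (k : ℕ) < I → a' k = a k) (t : ℕ) :
    rookCount n a' I t + (if (i : ℕ) < I ∧ t < a i then 1 else 0) =
      rookCount n a I t + (if (i : ℕ) < I ∧ t < a' i then 1 else 0) := by
  rw [rookCount_eq_sum, rookCount_eq_sum, Fintype.sum_eq_add_sum_compl i,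
    Fintype.sum_eq_add_sum_compl i (fun k => if (k : ℕ) < I ∧ t < a k then 1 else 0)]
  have hrest : ∑ k ∈ {i}ᶜ, (if (k : ℕ) < I ∧ t < a' k then 1 else 0) =
      ∑ k ∈ {i}ᶜ, (if (k : ℕ) < I ∧ t < a k then 1 else 0) := by
    refine sum_congr rfl fun k hk => ?_
    by_cases hkI : (k : ℕ) < I
    · rw [h k (by simpa using hk) hkI]
    · simp [hkI]
  rw [hrest]
  ring

end RookCount

section Step

variable {n : ℕ} {a b : Fin n → ℕ}

lemma eq_comp_swap_of_eq {i j : Fin n} (hbi : b i = a j) (hbj : b j = a i)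
    (h : ∀ m, m ≠ i → m ≠ j → a m = b m) : b = a ∘ Equiv.swap i j := by
  funext m
  rcases eq_or_ne m i with rfl | hmi
  · simpa using hbi
  rcases eq_or_ne m j with rfl | hmj
  · simpa using hbj
  · simpa [Equiv.swap_apply_of_ne_of_ne hmi hmj] using (h m hmi hmj).symm

lemma BCRStep.rookCountLE (h : BCRStep n a b) : RookCountLE n a b := by
  obtain ⟨-, -, ⟨i, hi, hrest⟩ | ⟨i, j, hij, hbi, hbj, hlt, hrest⟩⟩ := h
  · refine fun I => rookCount_mono fun k _ => ?_
    rcases eq_or_ne k i with rfl | hki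
    · exact hi.le
    · exact (hrest k hki).le
  · intro I t
    by_cases hjI : (j : ℕ) < I
    · rw [eq_comp_swap_of_eq hbi hbj hrest, rookCount_comp_swap a (by omega) hjI]
    · refine rookCount_mono (fun k hk => ?_) t
      rcases eq_or_ne k i with rfl | hki
      · omega
      · rw [hrest k hki (by omega)]

lemma BCRle.rookCountLE (h : BCRle n a b) : RookCountLE n a b := by
  induction h with
  | refl => exact fun _ _ => le_rfl
  | tail _ hstep ih => exact fun I t => (ih I t).trans (hstep.rookCountLE I t)

end Step

lemma IsRook.comp_equiv {n : ℕ} {a : Fin n → ℕ} (ha : IsRook n a) (e : Equiv.Perm (Fin n)) :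
    IsRook n (a ∘ e) :=
  ⟨fun _ => ha.1 _, fun _ _ h0 he => e.injective (ha.2 _ _ h0 he)⟩

section Climb

variable {n : ℕ} {a b : Fin n → ℕ} {i : Fin n}

lemma rookCount_lt_rookCount_succ {a' : Fin n → ℕ} (hpre : ∀ m < i, a' m = a m)
    (h : a i < a' i) : rookCount n a (i + 1) (a i) < rookCount n a' (i + 1) (a i) := by
  have := rookCount_add_ite (i := i) (I := i + 1) (fun k hki _ => hpre k (by omega)) (a i)
  simp only [lt_add_one, true_and, lt_irrefl, and_false, if_false, h, if_true] at this
  omega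

lemma RookCountLE.le_of_forall_lt_eq (hdom : RookCountLE n a b) (hpre : ∀ m < i, a m = b m) :
    a i ≤ b i := by
  by_contra! h
  have hd := hdom (i + 1) (b i)
  have := rookCount_add_ite (i := i) (I := i + 1) (fun k hki _ => (hpre k (by omega)).symm) (b i)
  simp only [lt_add_one, true_and, lt_irrefl, if_false, h, if_true] at this
  omega

/-- Compare the counts at heights `t` and `b i`: positions after `i` whose `a`-value is
outside `(a i, b i]` contribute to `a` equally at both heights, so dominance at height
`b i` forces a strict inequality at height `t`, to which `i` contributes only for `b`. -/
lemma rookCount_lt_of_gap (hdom : RookCountLE n a b) (hpre : ∀ m < i, a m = b m) {I t : ℕ}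
    (hiI : (i : ℕ) < I) (ht : a i ≤ t) (htb : t < b i)
    (hgap : ∀ m, i < m → (m : ℕ) < I → a i < a m → b i < a m) :
    rookCount n a I t < rookCount n b I t := by
  set u := b i
  have key : ∀ k : Fin n,
      ((if (k : ℕ) < I ∧ t < a k then 1 else 0) + (if (k : ℕ) < I ∧ u < b k then 1 else 0)) +
        (if k = i then 1 else 0) ≤
      (if (k : ℕ) < I ∧ t < b k then 1 else 0) + (if (k : ℕ) < I ∧ u < a k then 1 else 0) := by
    intro k
    rcases lt_trichotomy k i with hki | rfl | hki
    · have := hpre k hki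
      split_ifs <;> omega
    · split_ifs <;> omega
    · by_cases hkI : (k : ℕ) < I
      · have := hgap k hki hkI
        split_ifs <;> omega
      · split_ifs <;> omega
  have hsum := sum_le_sum fun k (_ : k ∈ univ) => key k
  simp only [sum_add_distrib, sum_ite_eq', mem_univ, if_true,
    ← rookCount_eq_sum] at hsum
  have := hdom I u
  omega

lemma isRook_update_of_gap (ha : IsRook n a) (hb : IsRook n b) (hpre : ∀ m < i, a m = b m)
    (hlt : a i < b i) (hgap : ∀ m, i < m → a i < a m → b i < a m) :
    IsRook n (Function.update a i (b i)) := by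
  have hfresh : ∀ m, m ≠ i → a m ≠ b i := by
    intro m hmi hm
    rcases lt_or_gt_of_ne hmi with hmi | hmi
    · have := hpre m hmi
      exact hmi.ne (hb.2 m i (by omega) (by omega))
    · have := hgap m hmi
      omega
  refine ⟨fun m => ?_, fun k m h0 he => ?_⟩
  · rcases eq_or_ne m i with rfl | hmi
    · simpa using hb.1 m
    · simpa [hmi] using ha.1 m
  · rcases eq_or_ne k i with rfl | hki <;> rcases eq_or_ne m k with rfl | hmk
    · rfl
    · exact absurd (by simpa [hmk] using he.symm) (hfresh m hmk)
    · rfl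
    · rcases eq_or_ne m i with rfl | hmi
      · exact absurd (by simpa [hki] using he) (hfresh k hki)
      · exact ha.2 k m (by simpa [hki] using h0) (by simpa [hki, hmi] using he)

lemma rookCountLE_update_of_gap (hdom : RookCountLE n a b) (hpre : ∀ m < i, a m = b m)
    (hgap : ∀ m, i < m → a i < a m → b i < a m) :
    RookCountLE n (Function.update a i (b i)) b := by
  intro I t
  have := rookCount_add_ite (i := i) (I := I)
    (fun k hki _ => Function.update_of_ne hki (b i) a) t
  by_cases hraise : (i : ℕ) < I ∧ a i ≤ t ∧ t < b i
  · have := rookCount_lt_of_gap hdom hpre hraise.1 hraise.2.1 hraise.2.2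
      fun m him _ => hgap m him
    simp only [Function.update_self] at *
    split_ifs at * <;> omega
  · have := hdom I t
    simp only [Function.update_self] at *
    split_ifs at * <;> omega

lemma rookCountLE_comp_swap_of_gap (hdom : RookCountLE n a b) (hpre : ∀ m < i, a m = b m)
    {j : Fin n} (hij : i < j) (hjb : a j ≤ b i)
    (hgap : ∀ m, i < m → m < j → a i < a m → b i < a m) :
    RookCountLE n (a ∘ Equiv.swap i j) b := by
  intro I t
  by_cases hjI : (j : ℕ) < I
  · rw [rookCount_comp_swap a (by omega) hjI]
    exact hdom I t
  have := rookCount_add_ite (i := i) (I := I) (a := a) (a' := a ∘ Equiv.swap i j)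
    (fun k hki hkI => by simp [Equiv.swap_apply_of_ne_of_ne hki (by omega : k ≠ j)]) t
  by_cases hraise : (i : ℕ) < I ∧ a i ≤ t ∧ t < a j
  · have := rookCount_lt_of_gap hdom hpre hraise.1 hraise.2.1 (by omega)
      fun m him hmI => hgap m him (by omega)
    simp only [Function.comp_apply, Equiv.swap_apply_left] at *
    split_ifs at * <;> omega
  · have := hdom I t
    simp only [Function.comp_apply, Equiv.swap_apply_left] at *
    split_ifs at * <;> omega

lemma exists_bcrStep_of_rookCountLE (ha : IsRook n a) (hb : IsRook n b)
    (hdom : RookCountLE n a b) (hne : a ≠ b) :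
    ∃ a', BCRStep n a a' ∧ RookCountLE n a' b ∧
      ∃ i : Fin n, rookCount n a (i + 1) (a i) < rookCount n a' (i + 1) (a i) := by
  obtain ⟨i, hi, hmin⟩ := wellFounded_lt.has_min {k | a k ≠ b k} (Function.ne_iff.mp hne)
  have hpre : ∀ m < i, a m = b m := fun m hm => by_contra fun h => hmin m h hm
  have hlt : a i < b i := lt_of_le_of_ne (hdom.le_of_forall_lt_eq hpre) hi
  by_cases hswap : ∃ j, i < j ∧ a i < a j ∧ a j ≤ b i
  · obtain ⟨j, ⟨hij, hij', hjb⟩, hjmin⟩ :=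
      wellFounded_lt.has_min {j | i < j ∧ a i < a j ∧ a j ≤ b i} hswap
    have hgap : ∀ m, i < m → m < j → a i < a m → b i < a m := fun m him hmj hm =>
      lt_of_not_ge fun hmb => hjmin m ⟨him, hm, hmb⟩ hmj
    refine ⟨a ∘ Equiv.swap i j, ⟨ha, ha.comp_equiv _, Or.inr ⟨i, j, hij, ?_, ?_, ?_, ?_⟩⟩,
      rookCountLE_comp_swap_of_gap hdom hpre hij hjb hgap, i,
      rookCount_lt_rookCount_succ (fun m hm => ?_) (by simpa using hij')⟩
    · simp
    · simp
    · simpa using hij'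
    · intro m hmi hmj
      simp [Equiv.swap_apply_of_ne_of_ne hmi hmj]
    · simp [Equiv.swap_apply_of_ne_of_ne hm.ne (hm.trans hij).ne]
  · have hgap : ∀ m, i < m → a i < a m → b i < a m := fun m him hm =>
      lt_of_not_ge fun hmb => hswap ⟨m, him, hm, hmb⟩
    refine ⟨Function.update a i (b i), ⟨ha, isRook_update_of_gap ha hb hpre hlt hgap,
      Or.inl ⟨i, by simpa using hlt, fun m hm => (Function.update_of_ne hm _ _).symm⟩⟩,
      rookCountLE_update_of_gap hdom hpre hgap, i,
      rookCount_lt_rookCount_succ (fun m hm => Function.update_of_ne hm.ne _ _)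
        (by simpa using hlt)⟩

def rookCountSum (n : ℕ) (a : Fin n → ℕ) : ℕ :=
  ∑ p ∈ range (n + 1) ×ˢ range (n + 1), rookCount n a p.1 p.2

lemma BCRle.of_rookCountLE (ha : IsRook n a) (hb : IsRook n b) (hdom : RookCountLE n a b) :
    BCRle n a b := by
  induction hd : rookCountSum n b - rookCountSum n a using Nat.strong_induction_on
    generalizing a with
  | _ d ih =>
    by_cases hab : a = b
    · exact hab ▸ .refl
    obtain ⟨a', hstep, hdom', i, hi⟩ := exists_bcrStep_of_rookCountLE ha hb hdom hab
    have hlt : rookCountSum n a < rookCountSum n a' := by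
      refine sum_lt_sum (fun p _ => hstep.rookCountLE _ _) ⟨(i + 1, a i), ?_, hi⟩
      have := ha.1 i
      simp only [mem_product, mem_range]
      omega
    have hle : rookCountSum n a' ≤ rookCountSum n b := sum_le_sum fun p _ => hdom' _ _
    exact .head hstep (ih _ (by omega) hstep.2.1 hdom' rfl)

theorem bcrle_iff_rookCountLE (ha : IsRook n a) (hb : IsRook n b) :
    BCRle n a b ↔ RookCountLE n a b :=
  ⟨BCRle.rookCountLE, BCRle.of_rookCountLE ha hb⟩

end Climb

section Iota

variable {n : ℕ}

lemma isRook_iota {σ : Fin n → ℕ} (h : IsRook n σ) : IsRook (2 * n) (iota n σ) := by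
  refine ⟨fun i => ?_, fun i j h0 he => ?_⟩
  · unfold iota
    split
    · exact (h.1 _).trans (by omega)
    · omega
  · unfold iota at h0 he
    split_ifs at h0 he with hi hj
    · exact Fin.ext (by have := congrArg Fin.val (h.2 _ _ h0 he); simp at this; omega)
    · exact absurd he h0
    all_goals exact absurd rfl h0

lemma iota_apply_add (σ : Fin n → ℕ) (k : Fin n) (hk : (k : ℕ) + n < 2 * n) :
    iota n σ ⟨k + n, hk⟩ = σ k := by
  simp [iota]

lemma le_of_pos_iota {σ : Fin n → ℕ} {k : Fin (2 * n)} (h : 0 < iota n σ k) : n ≤ (k : ℕ) := by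
  by_contra hk
  simp [iota, hk] at h

lemma rookCount_iota (σ : Fin n → ℕ) (I t : ℕ) :
    rookCount (2 * n) (iota n σ) I t = rookCount n σ (I - n) t := by
  symm
  refine card_nbij' (fun k => ⟨k + n, by omega⟩) (fun k => ⟨k - n, by omega⟩)
    (fun k hk => ?_) (fun k hk => ?_) (fun k _ => Fin.ext (by simp)) (fun k hk => ?_)
  all_goals simp only [coe_filter, mem_univ, true_and, Set.mem_ofPred_eq] at hk ⊢
  · rw [iota_apply_add]
    exact ⟨by omega, hk.2⟩
  · have hkn := le_of_pos_iota (t.zero_le.trans_lt hk.2)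
    refine ⟨by omega, ?_⟩
    rw [← iota_apply_add σ _ (by simp; omega)]
    convert hk.2 using 2
    exact Fin.ext (by simp; omega)
  · have hkn := le_of_pos_iota (t.zero_le.trans_lt hk.2)
    exact Fin.ext (by simp; omega)

lemma rookCountLE_iota_iff {σ τ : Fin n → ℕ} :
    RookCountLE (2 * n) (iota n σ) (iota n τ) ↔ RookCountLE n σ τ := by
  simp only [RookCountLE, rookCount_iota]
  exact ⟨fun h I t => by simpa using h (I + n) t, fun h I t => h _ t⟩

end Iota

/-- `ι` is an order embedding for the Bruhat–Chevalley–Renner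
orders: `σ ≤ τ` on `n`-rooks iff `ι(σ) ≤ ι(τ)` on `2n`-rooks. -/
theorem stmt12 (n : ℕ) (σ τ : Fin n → ℕ) (hσ : IsRook n σ) (hτ : IsRook n τ) :
    BCRle n σ τ ↔ BCRle (2 * n) (iota n σ) (iota n τ) := by
  rw [bcrle_iff_rookCountLE hσ hτ, bcrle_iff_rookCountLE (isRook_iota hσ) (isRook_iota hτ),
    rookCountLE_iota_iff]
end
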